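/- arXiv:2605.01103 — 6 statements merged into one kernel-verified Lean document; each statement's English description precedes it below -/
import Mathlib

section
/- Let ħ > 0, R > 0, and let A be a real symmetric positive definite n×n matrix. The ħ-polar dual of the ellipsoid {x ∈ ℝⁿ : Ax·x ≤ R²} is the ellipsoid {p ∈ ℝⁿ : A⁻¹p·p ≤ (ħ/R)²}. In particular, {x : Ax·x ≤ ħ}^ħ = {p : A⁻¹p·p ≤ ħ}. -/
/-!
Write `q(p) = A⁻¹p·p`. The Cauchy–Schwarz inequality for the inner product `(x, y) ↦ Ax·y`,
applied to `A⁻¹p` and `x`, gives `(p·x)² ≤ q(p) (Ax·x)`, so `q(p) ≤ (ℏ/R)²` puts `p` in the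
polar dual. Conversely, the support function of the ellipsoid at `p` is attained at
`x = (R / √q(p)) A⁻¹p`, where `p·x = R √q(p)`; requiring this to be `≤ ℏ` gives `q(p) ≤ (ℏ/R)²`.
-/

open Matrix

noncomputable section

/-- The `ℏ`-polar dual of a set `X ⊆ ℝⁿ`:
`X^ℏ = {p : p ⬝ x ≤ ℏ for all x ∈ X}`. -/
def polarDual (ℏ : ℝ) {n : ℕ} (X : Set (Fin n → ℝ)) : Set (Fin n → ℝ) :=
  {p | ∀ x ∈ X, p ⬝ᵥ x ≤ ℏ}

def ellipsoid {ι : Type*} [Fintype ι] (A : Matrix ι ι ℝ) (c : ℝ) : Set (ι → ℝ) :=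
  {x | A *ᵥ x ⬝ᵥ x ≤ c}

namespace Matrix

variable {ι : Type*} [Fintype ι]

theorem PosSemidef.mulVec_dotProduct_self_nonneg {M : Matrix ι ι ℝ} (hM : M.PosSemidef)
    (x : ι → ℝ) : 0 ≤ M *ᵥ x ⬝ᵥ x := by
  simpa [dotProduct_comm] using hM.dotProduct_mulVec_nonneg x

theorem PosSemidef.mulVec_dotProduct_sq_le {M : Matrix ι ι ℝ} (hM : M.PosSemidef)
    (x y : ι → ℝ) : (M *ᵥ x ⬝ᵥ y) ^ 2 ≤ (M *ᵥ x ⬝ᵥ x) * (M *ᵥ y ⬝ᵥ y) := by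
  let := M.toSeminormedAddCommGroup hM
  let := M.toInnerProductSpace hM
  have h : (M *ᵥ x ⬝ᵥ y) * (M *ᵥ x ⬝ᵥ y) ≤ (M *ᵥ y ⬝ᵥ y) * (M *ᵥ x ⬝ᵥ x) :=
    real_inner_mul_inner_self_le y x
  linarith

variable [DecidableEq ι] {A : Matrix ι ι ℝ} {ℏ r : ℝ}

theorem PosDef.mulVec_inv_mulVec (hA : A.PosDef) (p : ι → ℝ) : A *ᵥ (A⁻¹ *ᵥ p) = p := by
  rw [mulVec_mulVec, mul_nonsing_inv A hA.det_pos.ne'.isUnit, one_mulVec]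

theorem PosDef.dotProduct_le_of_mem_ellipsoid (hA : A.PosDef) (hℏ : 0 ≤ ℏ) (hr : 0 < r)
    {p x : ι → ℝ} (hp : p ∈ ellipsoid A⁻¹ ((ℏ / r) ^ 2)) (hx : x ∈ ellipsoid A (r ^ 2)) :
    p ⬝ᵥ x ≤ ℏ := by
  have hcs := hA.posSemidef.mulVec_dotProduct_sq_le (A⁻¹ *ᵥ p) x
  rw [hA.mulVec_inv_mulVec, dotProduct_comm p (A⁻¹ *ᵥ p)] at hcs
  have hsq : (p ⬝ᵥ x) ^ 2 ≤ ℏ ^ 2 :=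
    calc (p ⬝ᵥ x) ^ 2 ≤ (A⁻¹ *ᵥ p ⬝ᵥ p) * (A *ᵥ x ⬝ᵥ x) := hcs
      _ ≤ (ℏ / r) ^ 2 * r ^ 2 :=
        mul_le_mul hp hx (hA.posSemidef.mulVec_dotProduct_self_nonneg x) (by positivity)
      _ = ℏ ^ 2 := by field_simp
  exact abs_le_of_sq_le_sq' hsq hℏ |>.2

theorem PosDef.mem_ellipsoid_inv_of_forall_dotProduct_le (hA : A.PosDef) (hr : 0 < r)
    {p : ι → ℝ} (hp : ∀ x ∈ ellipsoid A (r ^ 2), p ⬝ᵥ x ≤ ℏ) :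
    p ∈ ellipsoid A⁻¹ ((ℏ / r) ^ 2) := by
  rcases (hA.inv.posSemidef.mulVec_dotProduct_self_nonneg p).eq_or_lt with hq | hq
  · show A⁻¹ *ᵥ p ⬝ᵥ p ≤ _
    rw [← hq]
    positivity
  set q := A⁻¹ *ᵥ p ⬝ᵥ p
  set c := r / √q
  have hsqrt : 0 < √q := Real.sqrt_pos.2 hq
  have hcq : c ^ 2 * q = r ^ 2 := by
    rw [div_pow, Real.sq_sqrt hq.le]
    field_simp
  have hmem : c • A⁻¹ *ᵥ p ∈ ellipsoid A (r ^ 2) := by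
    change A *ᵥ (c • A⁻¹ *ᵥ p) ⬝ᵥ (c • A⁻¹ *ᵥ p) ≤ r ^ 2
    rw [mulVec_smul, hA.mulVec_inv_mulVec, smul_dotProduct, dotProduct_smul, dotProduct_comm p,
      smul_smul, smul_eq_mul, ← sq, hcq]
  have hval : p ⬝ᵥ (c • A⁻¹ *ᵥ p) = r * √q := by
    rw [dotProduct_smul, dotProduct_comm, smul_eq_mul, div_mul_eq_mul_div, div_eq_iff hsqrt.ne',
      mul_assoc, Real.mul_self_sqrt hq.le]
  have hle : √q ≤ ℏ / r := by
    rw [le_div_iff₀ hr, mul_comm, ← hval]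
    exact hp _ hmem
  calc q = √q ^ 2 := (Real.sq_sqrt hq.le).symm
    _ ≤ (ℏ / r) ^ 2 := pow_le_pow_left₀ hsqrt.le hle 2

end Matrix

theorem polarDual_ellipsoid {n : ℕ} {ℏ r : ℝ} (hℏ : 0 ≤ ℏ) (hr : 0 < r)
    {A : Matrix (Fin n) (Fin n) ℝ} (hA : A.PosDef) :
    polarDual ℏ (ellipsoid A (r ^ 2)) = ellipsoid A⁻¹ ((ℏ / r) ^ 2) :=
  Set.ext fun _ => ⟨hA.mem_ellipsoid_inv_of_forall_dotProduct_le hr,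
    fun hp _ hx => hA.dotProduct_le_of_mem_ellipsoid hℏ hr hp hx⟩

/-- The ℏ-polar dual of the ellipsoid `{x : Ax·x ≤ R²}` (with `A` symmetric positive
definite) is the ellipsoid `{p : A⁻¹p·p ≤ (ℏ/R)²}`; in particular
`{x : Ax·x ≤ ℏ}^ℏ = {p : A⁻¹p·p ≤ ℏ}`. -/
theorem statement1 (n : ℕ) (ℏ R : ℝ) (hℏ : 0 < ℏ) (hR : 0 < R)
    (A : Matrix (Fin n) (Fin n) ℝ) (hA : A.PosDef) :
    polarDual ℏ {x : Fin n → ℝ | A.mulVec x ⬝ᵥ x ≤ R ^ 2}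
        = {p : Fin n → ℝ | A⁻¹.mulVec p ⬝ᵥ p ≤ (ℏ / R) ^ 2} ∧
      polarDual ℏ {x : Fin n → ℝ | A.mulVec x ⬝ᵥ x ≤ ℏ}
        = {p : Fin n → ℝ | A⁻¹.mulVec p ⬝ᵥ p ≤ ℏ} := by
  refine ⟨polarDual_ellipsoid hℏ.le hR hA, ?_⟩
  have h := polarDual_ellipsoid hℏ.le (Real.sqrt_pos.2 hℏ) hA
  rwa [Real.div_sqrt, Real.sq_sqrt hℏ.le] at h
end
end

section
/- (Pre-Iwasawa decomposition.) Let S ∈ Sp(2n,ℝ) have n×n block form S = [[A, B],[C, D]]. Then there exist unique matrices P, L ∈ Sym(n,ℝ) with L positive definite, and a unique R ∈ Sp(2n,ℝ) ∩ O(2n,ℝ), such that S = V_{−P} M_L R. Explicitly, L = (AAᵀ + BBᵀ)^{−1/2}, P = (CAᵀ + DBᵀ)(AAᵀ + BBᵀ)⁻¹, and R = [[E, F],[−F, E]] with E = (AAᵀ + BBᵀ)^{−1/2}A and F = (AAᵀ + BBᵀ)^{−1/2}B. -/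
/-!
Write `G = AAᵀ + BBᵀ`. Besides `SᵀJS = J`, also `SJSᵀ = J` holds, and its blocks give
`ADᵀ - BCᵀ = 1`: the block row `[A B]` has full rank, so `G` is positive definite. The blocks of
`SᵀJS = J` express the bottom block row through the top one, `GC = (ACᵀ + BDᵀ)A - B` and
`GD = (ACᵀ + BDᵀ)B + A`; hence `P = (CAᵀ + DBᵀ)G⁻¹` is symmetric and `S = V_{-P} M_L R` with
`L = G^{-1/2}` and `R = [[LA, LB], [-LB, LA]]`. Conversely, an orthogonal symplectic `R` commutes
with `J`, so `R = [[E, F], [-F, E]]`; the top block row of `S = V_{-P} M_L R` gives `E = LA` and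
`F = LB`, orthogonality of `R` becomes `LGL = 1`, and the bottom block row then forces
`P = (CAᵀ + DBᵀ)G⁻¹`.
-/

open Matrix

noncomputable section

/-- The standard symplectic matrix `J = [[0, I],[-I, 0]]` on `ℝⁿ × ℝⁿ`. -/
def stdJ (n : ℕ) : Matrix (Fin n ⊕ Fin n) (Fin n ⊕ Fin n) ℝ :=
  Matrix.fromBlocks 0 1 (-1) 0

/-- `S ∈ Sp(2n, ℝ)` iff `Sᵀ J S = J`. -/
def IsSymplectic {n : ℕ} (S : Matrix (Fin n ⊕ Fin n) (Fin n ⊕ Fin n) ℝ) : Prop :=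
  Sᵀ * stdJ n * S = stdJ n

/-- `M_L = [[L⁻¹, 0],[0, Lᵀ]]` for `L ∈ GL(n, ℝ)`. -/
def ML {n : ℕ} (L : Matrix (Fin n) (Fin n) ℝ) :
    Matrix (Fin n ⊕ Fin n) (Fin n ⊕ Fin n) ℝ :=
  Matrix.fromBlocks L⁻¹ 0 0 Lᵀ

/-- `V_{-P} = [[I, 0],[P, I]]` for symmetric `P`. -/
def VmP {n : ℕ} (P : Matrix (Fin n) (Fin n) ℝ) :
    Matrix (Fin n ⊕ Fin n) (Fin n ⊕ Fin n) ℝ :=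
  Matrix.fromBlocks 1 0 P 1

namespace Matrix

variable {m : Type*} [Fintype m] [DecidableEq m]

theorem mul_mul_eq_one_iff_mul_self_eq_inv {α : Type*} [CommRing α] {L G : Matrix m m α}
    (hG : IsUnit G.det) : L * G * L = 1 ↔ L * L = G⁻¹ := by
  rw [mul_eq_one_comm, ← mul_assoc]
  exact ⟨fun h => (inv_eq_left_inv h).symm, fun h => by rw [h, nonsing_inv_mul _ hG]⟩

theorem fromBlocks_neg_transpose_mul_self_eq_one_iff {α : Type*} [CommRing α]
    {E F : Matrix m m α} :
    (fromBlocks E F (-F) E)ᵀ * fromBlocks E F (-F) E = 1 ↔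
      E * Eᵀ + F * Fᵀ = 1 ∧ E * Fᵀ = F * Eᵀ := by
  rw [mul_eq_one_comm, fromBlocks_transpose, fromBlocks_multiply, ← fromBlocks_one,
    fromBlocks_inj]
  simp only [transpose_neg, mul_neg, neg_mul, neg_neg]
  constructor
  · rintro ⟨h, hEF, -, -⟩
    exact ⟨h, neg_add_eq_zero.mp hEF⟩
  · rintro ⟨h, hEF⟩
    refine ⟨h, by rw [hEF, neg_add_cancel], by rw [hEF, neg_add_cancel], by rw [add_comm, h]⟩

theorem posDef_mul_transpose_add_mul_transpose {A B X Y : Matrix m m ℝ}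
    (h : A * X + B * Y = 1) : (A * Aᵀ + B * Bᵀ).PosDef := by
  have hinj : Function.Injective (fromCols A B).vecMul :=
    Function.LeftInverse.injective (g := fun v => v ᵥ* fromRows X Y) fun v => by
      simp only [vecMul_vecMul, fromCols_mul_fromRows, h, vecMul_one]
  simpa [transpose_fromCols, fromCols_mul_fromRows] using
    PosDef.mul_conjTranspose_self _ hinj

open scoped MatrixOrder in
theorem PosDef.exists_posDef_mul_self_eq {M : Matrix m m ℝ} (hM : M.PosDef) :
    ∃ L : Matrix m m ℝ, L.PosDef ∧ L * L = M := by
  have hsq : CFC.sqrt M * CFC.sqrt M = M := CFC.sqrt_mul_sqrt_self M hM.posSemidef.nonneg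
  refine ⟨CFC.sqrt M, (CFC.sqrt_nonneg M).posSemidef.posDef_iff_isUnit.mpr ?_, hsq⟩
  exact isUnit_of_mul_isUnit_left (hsq ▸ hM.isUnit)

end Matrix

section

variable {n : ℕ}

theorem stdJ_mul_stdJ : stdJ n * stdJ n = -1 := by
  simp [stdJ, fromBlocks_multiply, ← fromBlocks_one, fromBlocks_neg]

theorem isSymplectic_fromBlocks_iff {A B C D : Matrix (Fin n) (Fin n) ℝ} :
    IsSymplectic (fromBlocks A B C D) ↔
      Aᵀ * C - Cᵀ * A = 0 ∧ Aᵀ * D - Cᵀ * B = 1 ∧ Bᵀ * C - Dᵀ * A = -1 ∧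
        Bᵀ * D - Dᵀ * B = 0 := by
  rw [IsSymplectic, stdJ, fromBlocks_transpose, fromBlocks_multiply, fromBlocks_multiply,
    fromBlocks_inj]
  simp only [mul_zero, mul_one, mul_neg, neg_mul, zero_add, add_zero, neg_add_eq_sub]

theorem IsSymplectic.transpose {S : Matrix (Fin n ⊕ Fin n) (Fin n ⊕ Fin n) ℝ}
    (hS : IsSymplectic S) : IsSymplectic Sᵀ := by
  have hinv : S * (-(stdJ n) * Sᵀ * stdJ n) = 1 := by
    rw [mul_eq_one_comm]
    calc -(stdJ n) * Sᵀ * stdJ n * S = -(stdJ n) * (Sᵀ * stdJ n * S) := by noncomm_ring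
      _ = 1 := by rw [hS, neg_mul, stdJ_mul_stdJ, neg_neg]
  calc Sᵀᵀ * stdJ n * Sᵀ = -(S * stdJ n * Sᵀ) * (stdJ n * stdJ n) := by
        rw [stdJ_mul_stdJ, transpose_transpose]; noncomm_ring
    _ = S * (-(stdJ n) * Sᵀ * stdJ n) * stdJ n := by noncomm_ring
    _ = stdJ n := by rw [hinv, one_mul]

theorem isSymplectic_iff_commute_stdJ {R : Matrix (Fin n ⊕ Fin n) (Fin n ⊕ Fin n) ℝ}
    (hR : Rᵀ * R = 1) : IsSymplectic R ↔ Commute (stdJ n) R := by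
  have hR' : R * Rᵀ = 1 := mul_eq_one_comm.mp hR
  constructor
  · intro h
    calc stdJ n * R = R * Rᵀ * stdJ n * R := by rw [hR', one_mul]
      _ = R * (Rᵀ * stdJ n * R) := by simp only [mul_assoc]
      _ = R * stdJ n := congrArg (R * ·) h
  · intro h
    rw [IsSymplectic, mul_assoc, h.eq, ← mul_assoc, hR, one_mul]

theorem commute_stdJ_fromBlocks_iff {E F G H : Matrix (Fin n) (Fin n) ℝ} :
    Commute (stdJ n) (fromBlocks E F G H) ↔ G = -F ∧ H = E := by
  rw [Commute, SemiconjBy, stdJ, fromBlocks_multiply, fromBlocks_multiply, fromBlocks_inj]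
  simp only [zero_mul, one_mul, neg_mul, zero_add, add_zero, mul_zero, mul_one, mul_neg]
  constructor
  · rintro ⟨h, h', -, -⟩
    exact ⟨h, h'⟩
  · rintro ⟨rfl, rfl⟩
    simp

theorem IsSymplectic.exists_eq_fromBlocks_of_transpose_mul_self_eq_one
    {R : Matrix (Fin n ⊕ Fin n) (Fin n ⊕ Fin n) ℝ} (hR : IsSymplectic R) (hRo : Rᵀ * R = 1) :
    ∃ E F, R = fromBlocks E F (-F) E := by
  rw [← fromBlocks_toBlocks R] at hR ⊢
  obtain ⟨h₂₁, h₂₂⟩ := commute_stdJ_fromBlocks_iff.mp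
    ((isSymplectic_iff_commute_stdJ (by rwa [fromBlocks_toBlocks])).mp hR)
  exact ⟨_, _, by rw [h₂₁, h₂₂]⟩

theorem VmP_mul_ML_mul_fromBlocks (P : Matrix (Fin n) (Fin n) ℝ) {L : Matrix (Fin n) (Fin n) ℝ}
    (hL : L.IsSymm) (hdet : IsUnit L.det) (A B : Matrix (Fin n) (Fin n) ℝ) :
    VmP P * ML L * fromBlocks (L * A) (L * B) (-(L * B)) (L * A) =
      fromBlocks A B (P * A - L * L * B) (P * B + L * L * A) := by
  simp [VmP, ML, fromBlocks_multiply, hL.eq, mul_assoc, sub_eq_add_neg,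
    nonsing_inv_mul_cancel_left L _ hdet]

end

namespace IsSymplectic

variable {n : ℕ} {A B C D : Matrix (Fin n) (Fin n) ℝ}

theorem fromBlocks_row_relations (hS : IsSymplectic (fromBlocks A B C D)) :
    A * Bᵀ - B * Aᵀ = 0 ∧ A * Dᵀ - B * Cᵀ = 1 ∧ C * Bᵀ - D * Aᵀ = -1 ∧
      C * Dᵀ - D * Cᵀ = 0 := by
  simpa only [fromBlocks_transpose, isSymplectic_fromBlocks_iff, transpose_transpose] using
    hS.transpose

theorem posDef_gram (hS : IsSymplectic (fromBlocks A B C D)) :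
    (A * Aᵀ + B * Bᵀ).PosDef :=
  posDef_mul_transpose_add_mul_transpose (X := Dᵀ) (Y := -Cᵀ) <| by
    rw [mul_neg, ← sub_eq_add_neg]
    exact hS.fromBlocks_row_relations.2.1

theorem gram_mul_bottom (hS : IsSymplectic (fromBlocks A B C D)) :
    (A * Aᵀ + B * Bᵀ) * C = (A * Cᵀ + B * Dᵀ) * A - B ∧
      (A * Aᵀ + B * Bᵀ) * D = (A * Cᵀ + B * Dᵀ) * B + A := by
  obtain ⟨h₁, h₂, h₃, h₄⟩ := isSymplectic_fromBlocks_iff.mp hS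
  exact ⟨by linear_combination (norm := noncomm_ring) A * h₁ + B * h₃,
    by linear_combination (norm := noncomm_ring) A * h₂ + B * h₄⟩

theorem inv_gram_mul_comm (hS : IsSymplectic (fromBlocks A B C D)) :
    (A * Aᵀ + B * Bᵀ)⁻¹ * (A * Cᵀ + B * Dᵀ) = (C * Aᵀ + D * Bᵀ) * (A * Aᵀ + B * Bᵀ)⁻¹ := by
  have hG : IsUnit (A * Aᵀ + B * Bᵀ).det := hS.posDef_gram.det_pos.ne'.isUnit
  obtain ⟨hC, hD⟩ := hS.gram_mul_bottom
  have hAB := hS.fromBlocks_row_relations.1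
  have h : (A * Cᵀ + B * Dᵀ) * (A * Aᵀ + B * Bᵀ) = (A * Aᵀ + B * Bᵀ) * (C * Aᵀ + D * Bᵀ) := by
    linear_combination (norm := noncomm_ring) -(hC * Aᵀ) - hD * Bᵀ - hAB
  set G := A * Aᵀ + B * Bᵀ
  calc G⁻¹ * (A * Cᵀ + B * Dᵀ) = G⁻¹ * ((A * Cᵀ + B * Dᵀ) * G) * G⁻¹ := by
        rw [← mul_assoc, mul_nonsing_inv_cancel_right G _ hG]
    _ = (C * Aᵀ + D * Bᵀ) * G⁻¹ := by rw [h, nonsing_inv_mul_cancel_left G _ hG]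

theorem isSymm_mul_inv_gram (hS : IsSymplectic (fromBlocks A B C D)) :
    ((C * Aᵀ + D * Bᵀ) * (A * Aᵀ + B * Bᵀ)⁻¹).IsSymm := by
  rw [IsSymm, transpose_mul, transpose_nonsing_inv, ← hS.inv_gram_mul_comm]
  simp [transpose_add, transpose_mul]

theorem bottom_row_eq (hS : IsSymplectic (fromBlocks A B C D)) :
    C = (C * Aᵀ + D * Bᵀ) * (A * Aᵀ + B * Bᵀ)⁻¹ * A - (A * Aᵀ + B * Bᵀ)⁻¹ * B ∧
      D = (C * Aᵀ + D * Bᵀ) * (A * Aᵀ + B * Bᵀ)⁻¹ * B + (A * Aᵀ + B * Bᵀ)⁻¹ * A := by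
  have hG : IsUnit (A * Aᵀ + B * Bᵀ).det := hS.posDef_gram.det_pos.ne'.isUnit
  obtain ⟨hC, hD⟩ := hS.gram_mul_bottom
  rw [← hS.inv_gram_mul_comm, mul_assoc, mul_assoc, ← mul_sub, ← mul_add, ← hC, ← hD,
    nonsing_inv_mul_cancel_left _ _ hG, nonsing_inv_mul_cancel_left _ _ hG]
  exact ⟨rfl, rfl⟩

theorem fromBlocks_transpose_mul_self_eq_one_iff (hS : IsSymplectic (fromBlocks A B C D))
    {L : Matrix (Fin n) (Fin n) ℝ} (hL : L.IsSymm) :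
    (fromBlocks (L * A) (L * B) (-(L * B)) (L * A))ᵀ *
        fromBlocks (L * A) (L * B) (-(L * B)) (L * A) = 1 ↔
      L * L = (A * Aᵀ + B * Bᵀ)⁻¹ := by
  have hG : IsUnit (A * Aᵀ + B * Bᵀ).det := hS.posDef_gram.det_pos.ne'.isUnit
  have hAB := hS.fromBlocks_row_relations.1
  have hEE : L * A * (L * A)ᵀ + L * B * (L * B)ᵀ = L * (A * Aᵀ + B * Bᵀ) * L := by
    rw [transpose_mul, transpose_mul, hL.eq]; noncomm_ring
  have hEF : L * A * (L * B)ᵀ = L * B * (L * A)ᵀ := by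
    rw [transpose_mul, transpose_mul, hL.eq]
    linear_combination (norm := noncomm_ring) L * hAB * L
  rw [fromBlocks_neg_transpose_mul_self_eq_one_iff, hEE, mul_mul_eq_one_iff_mul_self_eq_inv hG,
    and_iff_left hEF]

theorem eq_VmP_mul_ML_mul (hS : IsSymplectic (fromBlocks A B C D))
    {L : Matrix (Fin n) (Fin n) ℝ} (hL : L.IsSymm) (hdet : IsUnit L.det)
    (hLL : L * L = (A * Aᵀ + B * Bᵀ)⁻¹) :
    fromBlocks A B C D = VmP ((C * Aᵀ + D * Bᵀ) * (A * Aᵀ + B * Bᵀ)⁻¹) * ML L *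
      fromBlocks (L * A) (L * B) (-(L * B)) (L * A) := by
  rw [VmP_mul_ML_mul_fromBlocks _ hL hdet, hLL, ← hS.bottom_row_eq.1, ← hS.bottom_row_eq.2]

theorem exists_preIwasawa_decomposition (hS : IsSymplectic (fromBlocks A B C D)) :
    ∃ (P L : Matrix (Fin n) (Fin n) ℝ) (R : Matrix (Fin n ⊕ Fin n) (Fin n ⊕ Fin n) ℝ),
      P.IsSymm ∧ L.IsSymm ∧ L.PosDef ∧ IsSymplectic R ∧ Rᵀ * R = 1 ∧
        fromBlocks A B C D = VmP P * ML L * R := by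
  obtain ⟨L, hL, hLL⟩ := hS.posDef_gram.inv.exists_posDef_mul_self_eq
  have hLs : L.IsSymm := isHermitian_iff_isSymm.mp hL.isHermitian
  have hRo := (hS.fromBlocks_transpose_mul_self_eq_one_iff hLs).mpr hLL
  refine ⟨_, L, _, hS.isSymm_mul_inv_gram, hLs, hL,
    (isSymplectic_iff_commute_stdJ hRo).mpr (commute_stdJ_fromBlocks_iff.mpr ⟨rfl, rfl⟩), hRo,
    hS.eq_VmP_mul_ML_mul hLs hL.det_pos.ne'.isUnit hLL⟩

theorem preIwasawa_decomposition_unique (hS : IsSymplectic (fromBlocks A B C D))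
    {P L : Matrix (Fin n) (Fin n) ℝ} {R : Matrix (Fin n ⊕ Fin n) (Fin n ⊕ Fin n) ℝ}
    (hL : L.PosDef) (hR : IsSymplectic R) (hRo : Rᵀ * R = 1)
    (h : fromBlocks A B C D = VmP P * ML L * R) :
    L * L = (A * Aᵀ + B * Bᵀ)⁻¹ ∧ P = (C * Aᵀ + D * Bᵀ) * (A * Aᵀ + B * Bᵀ)⁻¹ ∧
      R = fromBlocks (L * A) (L * B) (-(L * B)) (L * A) := by
  have hLs : L.IsSymm := isHermitian_iff_isSymm.mp hL.isHermitian
  have hdet : IsUnit L.det := hL.det_pos.ne'.isUnit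
  obtain ⟨E, F, rfl⟩ := hR.exists_eq_fromBlocks_of_transpose_mul_self_eq_one hRo
  have hA : A = L⁻¹ * E := by simpa [VmP, ML, fromBlocks_multiply] using congrArg toBlocks₁₁ h
  have hB : B = L⁻¹ * F := by simpa [VmP, ML, fromBlocks_multiply] using congrArg toBlocks₁₂ h
  obtain rfl : E = L * A := by rw [hA, mul_nonsing_inv_cancel_left L _ hdet]
  obtain rfl : F = L * B := by rw [hB, mul_nonsing_inv_cancel_left L _ hdet]
  have hLL := (hS.fromBlocks_transpose_mul_self_eq_one_iff hLs).mp hRo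
  refine ⟨hLL, ?_, rfl⟩
  have h' := h.symm.trans (hS.eq_VmP_mul_ML_mul hLs hdet hLL)
  rw [VmP_mul_ML_mul_fromBlocks _ hLs hdet, VmP_mul_ML_mul_fromBlocks _ hLs hdet,
    fromBlocks_inj] at h'
  obtain ⟨-, -, hPA, hPB⟩ := h'
  refine hS.posDef_gram.isUnit.mul_right_cancel ?_
  simp only [mul_add, ← mul_assoc, sub_left_inj.mp hPA, add_right_cancel hPB]

end IsSymplectic

/-- Pre-Iwasawa decomposition: every symplectic `S = [[A,B],[C,D]]` factors uniquely as
`S = V_{-P} M_L R` with `P`, `L` symmetric, `L` positive definite, and `R` a symplectic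
rotation; moreover necessarily `L = (AAᵀ + BBᵀ)^{-1/2}` (i.e. `L² = (AAᵀ + BBᵀ)⁻¹`),
`P = (CAᵀ + DBᵀ)(AAᵀ + BBᵀ)⁻¹`, and `R = [[LA, LB],[-LB, LA]]`. -/
theorem statement7 (n : ℕ) (A B C D : Matrix (Fin n) (Fin n) ℝ)
    (hS : IsSymplectic (Matrix.fromBlocks A B C D)) :
    (∃ (P L : Matrix (Fin n) (Fin n) ℝ)
        (R : Matrix (Fin n ⊕ Fin n) (Fin n ⊕ Fin n) ℝ),
      P.IsSymm ∧ L.IsSymm ∧ L.PosDef ∧ IsSymplectic R ∧ Rᵀ * R = 1 ∧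
        Matrix.fromBlocks A B C D = VmP P * ML L * R) ∧
    (∀ (P L : Matrix (Fin n) (Fin n) ℝ)
        (R : Matrix (Fin n ⊕ Fin n) (Fin n ⊕ Fin n) ℝ),
      P.IsSymm → L.IsSymm → L.PosDef → IsSymplectic R → Rᵀ * R = 1 →
      Matrix.fromBlocks A B C D = VmP P * ML L * R →
      L * L = (A * Aᵀ + B * Bᵀ)⁻¹ ∧
        P = (C * Aᵀ + D * Bᵀ) * (A * Aᵀ + B * Bᵀ)⁻¹ ∧
        R = Matrix.fromBlocks (L * A) (L * B) (-(L * B)) (L * A)) :=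
  ⟨hS.exists_preIwasawa_decomposition, fun _ _ _ _ _ hL hR hRo h =>
    hS.preIwasawa_decomposition_unique hL hR hRo h⟩
end
end

section
/- Let ħ > 0. The map which sends a pair (W, Y) of real symmetric n×n matrices with W positive definite to the set V_Y M_{W^{−1/2}} (B^{2n}(√ħ)) ⊆ ℝ^{2n} is injective, and its range is exactly the collection of all quantum blobs, i.e. all sets S(B^{2n}(√ħ)) with S ∈ Sp(2n,ℝ). (Consequently, quantum blobs are in bijective correspondence with the generalized centered Gaussians ψ_{W,Y}(x) = (det W/(πħ)ⁿ)^{1/4} e^{−(W+iY)x·x/(2ħ)}.) -/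
/-!
For invertible `A`, the image of the ball `{z | z ⬝ᵥ z ≤ c}` under `A` determines and is
determined by `A * Aᵀ`: two such images agree exactly when `B⁻¹ * A` maps the ball onto itself,
i.e. is orthogonal. The Gram matrix of `V_Y M_L` (with `L * L = W⁻¹`) is
`[[W, -W Y], [-Y W, Y W Y + W⁻¹]]`, from which `W` and `Y` are read off. Conversely, for
symplectic `S` the matrix `P = S Sᵀ` is positive definite and symplectic, and the block relations
of `Pᵀ J P = J` force `P` into this shape with `W = P₁₁` and `Y = -P₁₁⁻¹ P₁₂`.
-/

open Matrix

noncomputable section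

/-- The closed ball of radius `r` centered at `0` in phase space `ℝⁿ × ℝⁿ`. -/
def ballPhase (n : ℕ) (r : ℝ) : Set ((Fin n ⊕ Fin n) → ℝ) :=
  {z | ∑ i, z i ^ 2 ≤ r ^ 2}

/-- `V_Y = [[I, 0],[-Y, I]]` for symmetric `Y`. -/
def VY {n : ℕ} (Y : Matrix (Fin n) (Fin n) ℝ) :
    Matrix (Fin n ⊕ Fin n) (Fin n ⊕ Fin n) ℝ :=
  Matrix.fromBlocks 1 0 (-Y) 1

section Ellipsoid

variable {m : Type*} [Fintype m]

theorem Matrix.IsSymm.ext_of_dotProduct_mulVec {R : Type*} [Field R] [NeZero (2 : R)]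
    [DecidableEq m] {P Q : Matrix m m R} (hP : P.IsSymm) (hQ : Q.IsSymm)
    (h : ∀ z, z ⬝ᵥ P *ᵥ z = z ⬝ᵥ Q *ᵥ z) : P = Q :=
  Matrix.toBilin'.injective <|
    LinearMap.BilinForm.ext_of_isSymm (isSymm_toBilin'_iff_isSymm.mpr hP)
      (isSymm_toBilin'_iff_isSymm.mpr hQ) fun z => by simpa only [toBilin'_apply'] using h z

theorem Matrix.dotProduct_mulVec_self_mulVec (O : Matrix m m ℝ) (z : m → ℝ) :
    O *ᵥ z ⬝ᵥ O *ᵥ z = z ⬝ᵥ (Oᵀ * O) *ᵥ z := by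
  rw [dotProduct_mulVec, dotProduct_mulVec, ← vecMul_transpose, vecMul_vecMul]

theorem Matrix.transpose_mul_self_eq_one_iff [DecidableEq m] {O : Matrix m m ℝ} :
    Oᵀ * O = 1 ↔ ∀ z, O *ᵥ z ⬝ᵥ O *ᵥ z = z ⬝ᵥ z := by
  simp_rw [dotProduct_mulVec_self_mulVec]
  refine ⟨fun h z => by rw [h, one_mulVec], fun h => ?_⟩
  exact (isSymm_transpose_mul_self O).ext_of_dotProduct_mulVec isSymm_one
    fun z => by rw [h, one_mulVec]

theorem Matrix.dotProduct_mulVec_self_le_of_mapsTo {O : Matrix m m ℝ} {c : ℝ} (hc : 0 < c)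
    (h : Set.MapsTo O.mulVec {z | z ⬝ᵥ z ≤ c} {z | z ⬝ᵥ z ≤ c}) (z : m → ℝ) :
    O *ᵥ z ⬝ᵥ O *ᵥ z ≤ z ⬝ᵥ z := by
  rcases eq_or_ne z 0 with rfl | hz
  · simp
  have hq : 0 < z ⬝ᵥ z := by simpa using dotProduct_self_star_pos_iff.mpr hz
  -- rescale `z` onto the sphere `z ⬝ᵥ z = c`, where the hypothesis applies
  set s := Real.sqrt (c / (z ⬝ᵥ z))
  have hs : 0 < s ^ 2 := by positivity
  have hsz : s ^ 2 * (z ⬝ᵥ z) = c := by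
    rw [Real.sq_sqrt (by positivity), div_mul_cancel₀ _ hq.ne']
  have hquad : ∀ v : m → ℝ, s • v ⬝ᵥ s • v = s ^ 2 * (v ⬝ᵥ v) := fun v => by
    simp only [smul_dotProduct, dotProduct_smul, smul_eq_mul]; ring
  have hmem := h (show s • z ⬝ᵥ s • z ≤ c by rw [hquad, hsz])
  rw [Set.mem_ofPred_eq, mulVec_smul, hquad, ← hsz] at hmem
  exact le_of_mul_le_mul_left hmem hs

variable [DecidableEq m]

theorem Matrix.mulVec_image_eq_self_iff {O : Matrix m m ℝ} (hO : IsUnit O.det) {c : ℝ}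
    (hc : 0 < c) : O.mulVec '' {z | z ⬝ᵥ z ≤ c} = {z | z ⬝ᵥ z ≤ c} ↔ Oᵀ * O = 1 := by
  rw [transpose_mul_self_eq_one_iff]
  constructor
  · intro h z
    have hO' : Set.MapsTo O⁻¹.mulVec {z | z ⬝ᵥ z ≤ c} {z | z ⬝ᵥ z ≤ c} := by
      rintro _ hw
      rw [← h] at hw
      obtain ⟨v, hv, rfl⟩ := hw
      rwa [Set.mem_ofPred_eq, mulVec_mulVec, nonsing_inv_mul _ hO, one_mulVec]
    have hmaps : Set.MapsTo O.mulVec {z | z ⬝ᵥ z ≤ c} {z | z ⬝ᵥ z ≤ c} := fun v hv =>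
      h ▸ Set.mem_image_of_mem _ hv
    refine le_antisymm (dotProduct_mulVec_self_le_of_mapsTo hc hmaps z) ?_
    simpa [mulVec_mulVec, nonsing_inv_mul _ hO] using
      dotProduct_mulVec_self_le_of_mapsTo hc hO' (O *ᵥ z)
  · intro h
    ext w
    refine ⟨?_, fun hw => ⟨O⁻¹ *ᵥ w, ?_, by rw [mulVec_mulVec, mul_nonsing_inv _ hO, one_mulVec]⟩⟩
    · rintro ⟨v, hv, rfl⟩
      rwa [Set.mem_ofPred_eq, h]
    · rwa [Set.mem_ofPred_eq, ← h, mulVec_mulVec, mul_nonsing_inv _ hO, one_mulVec]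

theorem Matrix.mulVec_image_eq_iff {A B : Matrix m m ℝ} (hA : IsUnit A.det) (hB : IsUnit B.det)
    {c : ℝ} (hc : 0 < c) :
    A.mulVec '' {z | z ⬝ᵥ z ≤ c} = B.mulVec '' {z | z ⬝ᵥ z ≤ c} ↔ A * Aᵀ = B * Bᵀ := by
  set O := B⁻¹ * A
  have hBO : A = B * O := (mul_nonsing_inv_cancel_left B A hB).symm
  have hO : IsUnit O.det := by
    rw [det_mul]
    exact (isUnit_nonsing_inv_det B hB).mul hA
  have himage : A.mulVec '' {z | z ⬝ᵥ z ≤ c} = B.mulVec '' (O.mulVec '' {z | z ⬝ᵥ z ≤ c}) := by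
    rw [Set.image_image, hBO]
    simp only [mulVec_mulVec]
  have hgram : A * Aᵀ = B * (O * Oᵀ) * Bᵀ := by
    rw [hBO, transpose_mul]
    simp only [Matrix.mul_assoc]
  have hBunit : IsUnit B := (isUnit_iff_isUnit_det B).mpr hB
  rw [himage, (Set.image_injective.mpr (mulVec_injective_iff_isUnit.mpr hBunit)).eq_iff,
    mulVec_image_eq_self_iff hO hc, mul_eq_one_comm, hgram]
  refine ⟨fun h => by rw [h, Matrix.mul_one], fun h => ?_⟩
  exact hBunit.mul_left_cancel <| ((isUnit_transpose B).mpr hBunit).mul_right_cancel <| by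
    rwa [Matrix.mul_one]

end Ellipsoid

theorem Matrix.PosDef.isUnit_det {K m : Type*} [Field K] [PartialOrder K] [StarRing K] [Fintype m]
    [DecidableEq m] {A : Matrix m m K} (hA : A.PosDef) : IsUnit A.det :=
  (isUnit_iff_isUnit_det A).mp hA.isUnit

theorem Matrix.PosDef.isSymm {R m : Type*} [Ring R] [PartialOrder R] [StarRing R] [TrivialStar R]
    [Fintype m] {A : Matrix m m R} (hA : A.PosDef) : A.IsSymm :=
  isHermitian_iff_isSymm.mp hA.isHermitian

open scoped MatrixOrder in
theorem Matrix.PosDef.exists_posDef_mul_self_eq_inv {m : Type*} [Fintype m] [DecidableEq m]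
    {W : Matrix m m ℝ} (hW : W.PosDef) : ∃ L : Matrix m m ℝ, L.PosDef ∧ L * L = W⁻¹ :=
  ⟨CFC.sqrt W⁻¹, hW.inv.isStrictlyPositive.sqrt.posDef,
    CFC.sqrt_mul_sqrt_self _ hW.inv.posSemidef.nonneg⟩

theorem ballPhase_eq (n : ℕ) (r : ℝ) : ballPhase n r = {z | z ⬝ᵥ z ≤ r ^ 2} := by
  simp [ballPhase, dotProduct, sq]

section Symplectic

variable {n : ℕ}

theorem stdJ_eq_neg_J : stdJ n = -J (Fin n) ℝ := by
  simp [stdJ, J, fromBlocks_neg]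

theorem isSymplectic_iff_mem_symplecticGroup {S : Matrix (Fin n ⊕ Fin n) (Fin n ⊕ Fin n) ℝ} :
    IsSymplectic S ↔ S ∈ symplecticGroup (Fin n) ℝ := by
  simp [IsSymplectic, SymplecticGroup.mem_iff', stdJ_eq_neg_J]

theorem VY_mem_symplecticGroup {Y : Matrix (Fin n) (Fin n) ℝ} (hY : Y.IsSymm) :
    VY Y ∈ symplecticGroup (Fin n) ℝ := by
  simp [VY, SymplecticGroup.fromBlocks_mem_iff, hY.eq]

theorem ML_mem_symplecticGroup {L : Matrix (Fin n) (Fin n) ℝ} (hL : IsUnit L.det) :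
    ML L ∈ symplecticGroup (Fin n) ℝ := by
  simp [ML, SymplecticGroup.fromBlocks_mem_iff, ← transpose_mul, mul_nonsing_inv _ hL]

theorem VY_mul_ML_mem_symplecticGroup {Y L : Matrix (Fin n) (Fin n) ℝ} (hY : Y.IsSymm)
    (hL : IsUnit L.det) : VY Y * ML L ∈ symplecticGroup (Fin n) ℝ :=
  mul_mem (VY_mem_symplecticGroup hY) (ML_mem_symplecticGroup hL)

theorem VY_mul_ML_mul_transpose {W Y L : Matrix (Fin n) (Fin n) ℝ} (hW : IsUnit W.det)
    (hY : Y.IsSymm) (hL : L.IsSymm) (hLW : L * L = W⁻¹) :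
    VY Y * ML L * (VY Y * ML L)ᵀ = fromBlocks W (-(W * Y)) (-(Y * W)) (Y * W * Y + W⁻¹) := by
  have hW' : L⁻¹ * L⁻¹ = W := by
    rw [← Matrix.mul_inv_rev, hLW, nonsing_inv_nonsing_inv _ hW]
  simp only [VY, ML, hL.eq, fromBlocks_multiply, one_mul, mul_zero, add_zero, zero_mul, neg_mul,
    zero_add, fromBlocks_transpose, transpose_nonsing_inv, transpose_neg, transpose_mul, hY.eq,
    transpose_zero, hW', mul_neg, Matrix.mul_assoc, neg_neg, hLW, fromBlocks_inj, neg_inj,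
    add_left_inj, true_and]
  constructor <;> rw [← hW', Matrix.mul_assoc]

theorem exists_eq_fromBlocks_of_posDef_mem_symplecticGroup {l : Type*} [Fintype l] [DecidableEq l]
    {P : Matrix (l ⊕ l) (l ⊕ l) ℝ} (hP : P.PosDef) (hPs : P ∈ symplecticGroup l ℝ) :
    ∃ W Y : Matrix l l ℝ, W.PosDef ∧ Y.IsSymm ∧
      P = fromBlocks W (-(W * Y)) (-(Y * W)) (Y * W * Y + W⁻¹) := by
  obtain ⟨A, B, C, D, rfl⟩ : ∃ A B C D, P = fromBlocks A B C D :=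
    ⟨_, _, _, _, (fromBlocks_toBlocks P).symm⟩
  have hA : A.PosDef := hP.submatrix Sum.inl_injective
  have hAu : IsUnit A.det := hA.isUnit_det
  have hAs : Aᵀ = A := hA.isSymm
  obtain ⟨-, hBC, -, -⟩ := isHermitian_fromBlocks_iff.mp hP.isHermitian
  rw [conjTranspose_eq_transpose_of_trivial] at hBC
  subst hBC
  obtain ⟨hAB, -, hAD⟩ := SymplecticGroup.fromBlocks_mem_iff.mp hPs
  rw [transpose_transpose, hAs] at hAB hAD
  have hBt : Bᵀ = A⁻¹ * B * A := by
    rw [Matrix.mul_assoc, ← hAB, nonsing_inv_mul_cancel_left _ _ hAu]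
  have hD : D = A⁻¹ * (1 + B * B) := by
    rw [← hAD, sub_add_cancel, nonsing_inv_mul_cancel_left _ _ hAu]
  refine ⟨A, -(A⁻¹ * B), hA, ?_, ?_⟩
  · rw [IsSymm, transpose_neg, transpose_mul, transpose_nonsing_inv, hAs, hBt,
      mul_nonsing_inv_cancel_right _ _ hAu]
  · simp only [Matrix.mul_neg, Matrix.neg_mul, neg_neg, mul_nonsing_inv_cancel_left _ _ hAu]
    rw [hBt, hD, Matrix.mul_assoc _ A, mul_nonsing_inv_cancel_left _ _ hAu, Matrix.mul_add,
      Matrix.mul_one, add_comm, Matrix.mul_assoc _ B B]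

theorem eq_of_VY_mul_ML_mul_transpose_eq {W Y L W' Y' L' : Matrix (Fin n) (Fin n) ℝ}
    (hW : IsUnit W.det) (hY : Y.IsSymm) (hL : L.IsSymm) (hLW : L * L = W⁻¹)
    (hW' : IsUnit W'.det) (hY' : Y'.IsSymm) (hL' : L'.IsSymm) (hLW' : L' * L' = W'⁻¹)
    (h : VY Y * ML L * (VY Y * ML L)ᵀ = VY Y' * ML L' * (VY Y' * ML L')ᵀ) : W = W' ∧ Y = Y' := by
  rw [VY_mul_ML_mul_transpose hW hY hL hLW, VY_mul_ML_mul_transpose hW' hY' hL' hLW',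
    fromBlocks_inj] at h
  obtain ⟨rfl, hWY, -, -⟩ := h
  refine ⟨rfl, ?_⟩
  rw [← nonsing_inv_mul_cancel_left W Y hW, neg_inj.mp hWY, nonsing_inv_mul_cancel_left W Y' hW]

theorem exists_VY_mul_ML_mul_transpose_eq {S : Matrix (Fin n ⊕ Fin n) (Fin n ⊕ Fin n) ℝ}
    (hS : S ∈ symplecticGroup (Fin n) ℝ) :
    ∃ W Y L : Matrix (Fin n) (Fin n) ℝ, W.PosDef ∧ Y.IsSymm ∧ L.PosDef ∧ L * L = W⁻¹ ∧
      S * Sᵀ = VY Y * ML L * (VY Y * ML L)ᵀ := by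
  have hP : (S * Sᵀ).PosDef := by
    simpa using PosDef.mul_conjTranspose_self S <| vecMul_injective_iff_isUnit.mpr <|
      (isUnit_iff_isUnit_det S).mpr (SymplecticGroup.symplectic_det hS)
  obtain ⟨W, Y, hW, hY, hSS⟩ := exists_eq_fromBlocks_of_posDef_mem_symplecticGroup hP
    (mul_mem hS (SymplecticGroup.transpose_mem hS))
  obtain ⟨L, hL, hLW⟩ := hW.exists_posDef_mul_self_eq_inv
  refine ⟨W, Y, L, hW, hY, hL, hLW, ?_⟩
  rw [hSS, VY_mul_ML_mul_transpose hW.isUnit_det hY hL.isSymm hLW]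

end Symplectic


/-- The map `(W, Y) ↦ V_Y M_{W^{-1/2}}(B^{2n}(√ℏ))` (with `W` symmetric positive
definite, `Y` symmetric, and `W^{-1/2}` the positive definite square root `L` of `W⁻¹`)
is injective, and its range is exactly the set of quantum blobs `S(B^{2n}(√ℏ))`,
`S ∈ Sp(2n,ℝ)`. -/
theorem statement9 (n : ℕ) (ℏ : ℝ) (hℏ : 0 < ℏ) :
    (∀ (W Y W' Y' L L' : Matrix (Fin n) (Fin n) ℝ),
      W.PosDef → Y.IsSymm → W'.PosDef → Y'.IsSymm →
      L.PosDef → L * L = W⁻¹ → L'.PosDef → L' * L' = W'⁻¹ →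
      (VY Y * ML L).mulVec '' ballPhase n (Real.sqrt ℏ)
        = (VY Y' * ML L').mulVec '' ballPhase n (Real.sqrt ℏ) →
      W = W' ∧ Y = Y') ∧
    (∀ (W Y L : Matrix (Fin n) (Fin n) ℝ),
      W.PosDef → Y.IsSymm → L.PosDef → L * L = W⁻¹ →
      ∃ S : Matrix (Fin n ⊕ Fin n) (Fin n ⊕ Fin n) ℝ, IsSymplectic S ∧
        (VY Y * ML L).mulVec '' ballPhase n (Real.sqrt ℏ)
          = S.mulVec '' ballPhase n (Real.sqrt ℏ)) ∧
    (∀ S : Matrix (Fin n ⊕ Fin n) (Fin n ⊕ Fin n) ℝ, IsSymplectic S →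
      ∃ W Y L : Matrix (Fin n) (Fin n) ℝ,
        W.PosDef ∧ Y.IsSymm ∧ L.PosDef ∧ L * L = W⁻¹ ∧
        S.mulVec '' ballPhase n (Real.sqrt ℏ)
          = (VY Y * ML L).mulVec '' ballPhase n (Real.sqrt ℏ)) := by
  have hc : 0 < Real.sqrt ℏ ^ 2 := by positivity
  have hdet {Y L : Matrix (Fin n) (Fin n) ℝ} (hY : Y.IsSymm) (hL : L.PosDef) :
      IsUnit (VY Y * ML L).det :=
    SymplecticGroup.symplectic_det <|
      VY_mul_ML_mem_symplecticGroup hY hL.isUnit_det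
  refine ⟨?_, ?_, ?_⟩
  · intro W Y W' Y' L L' hW hY hW' hY' hL hLW hL' hLW' himg
    rw [ballPhase_eq, mulVec_image_eq_iff (hdet hY hL) (hdet hY' hL') hc] at himg
    exact eq_of_VY_mul_ML_mul_transpose_eq hW.isUnit_det hY hL.isSymm hLW hW'.isUnit_det hY'
      hL'.isSymm hLW' himg
  · intro W Y L _ hY hL _
    exact ⟨_, isSymplectic_iff_mem_symplecticGroup.mpr <|
      VY_mul_ML_mem_symplecticGroup hY hL.isUnit_det, rfl⟩
  · intro S hS
    rw [isSymplectic_iff_mem_symplecticGroup] at hS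
    obtain ⟨W, Y, L, hW, hY, hL, hLW, hgram⟩ := exists_VY_mul_ML_mul_transpose_eq hS
    refine ⟨W, Y, L, hW, hY, hL, hLW, ?_⟩
    rw [ballPhase_eq, mulVec_image_eq_iff (SymplecticGroup.symplectic_det hS) (hdet hY hL) hc,
      hgram]
end
end

section
/- Let ħ > 0 and let M be a real symmetric positive definite 2n×2n matrix with n×n block form M = [[M_XX, M_XP],[M_PX, M_PP]]. Then the orthogonal projection of the ellipsoid Ω = {z ∈ ℝ^{2n} : Mz·z ≤ ħ} onto the x-space ℝⁿ_x is the ellipsoid {x ∈ ℝⁿ : (M_XX − M_XP M_PP⁻¹ M_PX)x·x ≤ ħ}, and the projection onto the p-space ℝⁿ_p is {p ∈ ℝⁿ : (M_PP − M_PX M_XX⁻¹ M_XP)p·p ≤ ħ}, where M/M_PP = M_XX − M_XP M_PP⁻¹ M_PX and M/M_XX = M_PP − M_PX M_XX⁻¹ M_XP are the Schur complements (both positive definite). -/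
/-!
Completing the square in the `p`-variables: with `D = M_PP` and `w = D⁻¹ M_PX x + p`,
`Mz·z = Dw·w + (M/M_PP)x·x`. Since `D` is positive definite, the minimum of `Mz·z` over the
fibre `Π_X z = x` is `(M/M_PP)x·x`, attained at `p = -D⁻¹ M_PX x`; this gives the projection
onto the `x`-space, and positivity of `Mz·z` at the minimiser gives positive definiteness of
`M/M_PP`. Exchanging the roles of `x` and `p` gives the other half.
-/

open Matrix

namespace Matrix

section

variable {m l : Type*} {M : Matrix (m ⊕ l) (m ⊕ l) ℝ}

theorem IsHermitian.toBlocks₂₁_eq (hM : M.IsHermitian) : M.toBlocks₂₁ = M.toBlocks₁₂ᴴ :=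
  (isHermitian_fromBlocks_iff.mp ((fromBlocks_toBlocks M).symm ▸ hM)).2.1.symm

theorem IsHermitian.toBlocks₁₁ (hM : M.IsHermitian) : M.toBlocks₁₁.IsHermitian :=
  hM.submatrix Sum.inl

theorem IsHermitian.toBlocks₂₂ (hM : M.IsHermitian) : M.toBlocks₂₂.IsHermitian :=
  hM.submatrix Sum.inr

theorem PosDef.toBlocks₂₂ [Fintype l] (hM : M.PosDef) : M.toBlocks₂₂.PosDef :=
  hM.submatrix Sum.inr_injective

variable [Fintype l] [DecidableEq l]

noncomputable def schurCompl₂₂ (M : Matrix (m ⊕ l) (m ⊕ l) ℝ) : Matrix m m ℝ :=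
  M.toBlocks₁₁ - M.toBlocks₁₂ * M.toBlocks₂₂⁻¹ * M.toBlocks₂₁

theorem IsHermitian.schurCompl₂₂ (hM : M.IsHermitian) : M.schurCompl₂₂.IsHermitian := by
  rw [Matrix.schurCompl₂₂, hM.toBlocks₂₁_eq]
  exact hM.toBlocks₁₁.sub (isHermitian_mul_mul_conjTranspose _ hM.toBlocks₂₂.inv)

variable [Fintype m]

theorem IsHermitian.dotProduct_mulVec_sumElim (hM : M.IsHermitian) (hD : IsUnit M.toBlocks₂₂)
    (x : m → ℝ) (y : l → ℝ) :
    M *ᵥ (x ⊕ᵥ y) ⬝ᵥ (x ⊕ᵥ y) =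
      M.toBlocks₂₂ *ᵥ ((M.toBlocks₂₂⁻¹ * M.toBlocks₂₁) *ᵥ x + y) ⬝ᵥ
          ((M.toBlocks₂₂⁻¹ * M.toBlocks₂₁) *ᵥ x + y) +
        M.schurCompl₂₂ *ᵥ x ⬝ᵥ x := by
  have := hD.invertible
  have h := schur_complement_eq₂₂ M.toBlocks₁₁ M.toBlocks₁₂ x y hM.toBlocks₂₂
  rw [← hM.toBlocks₂₁_eq, fromBlocks_toBlocks] at h
  rw [Matrix.schurCompl₂₂, dotProduct_comm (M *ᵥ _), dotProduct_comm (M.toBlocks₂₂ *ᵥ _),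
    dotProduct_comm (_ *ᵥ x), dotProduct_mulVec, dotProduct_mulVec, dotProduct_mulVec]
  simpa only [star_trivial] using h

theorem IsHermitian.dotProduct_mulVec_sumElim_neg (hM : M.IsHermitian) (hD : IsUnit M.toBlocks₂₂)
    (x : m → ℝ) :
    M *ᵥ (x ⊕ᵥ -((M.toBlocks₂₂⁻¹ * M.toBlocks₂₁) *ᵥ x)) ⬝ᵥ
        (x ⊕ᵥ -((M.toBlocks₂₂⁻¹ * M.toBlocks₂₁) *ᵥ x)) = M.schurCompl₂₂ *ᵥ x ⬝ᵥ x := by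
  rw [hM.dotProduct_mulVec_sumElim hD, add_neg_cancel, dotProduct_zero, zero_add]

theorem PosDef.schurCompl₂₂_dotProduct_le (hM : M.PosDef) (x : m → ℝ) (y : l → ℝ) :
    M.schurCompl₂₂ *ᵥ x ⬝ᵥ x ≤ M *ᵥ (x ⊕ᵥ y) ⬝ᵥ (x ⊕ᵥ y) := by
  rw [hM.isHermitian.dotProduct_mulVec_sumElim hM.toBlocks₂₂.isUnit, le_add_iff_nonneg_left,
    dotProduct_comm]
  simpa only [star_trivial] using hM.toBlocks₂₂.posSemidef.dotProduct_mulVec_nonneg _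

theorem PosDef.schurCompl₂₂ (hM : M.PosDef) : M.schurCompl₂₂.PosDef := by
  refine .of_dotProduct_mulVec_pos hM.isHermitian.schurCompl₂₂ fun x hx => ?_
  rw [star_trivial, dotProduct_comm,
    ← hM.isHermitian.dotProduct_mulVec_sumElim_neg hM.toBlocks₂₂.isUnit, dotProduct_comm]
  have hz : x ⊕ᵥ -((M.toBlocks₂₂⁻¹ * M.toBlocks₂₁) *ᵥ x) ≠ 0 := fun h =>
    hx (by simpa using congrArg (· ∘ Sum.inl) h)
  simpa only [star_trivial] using hM.dotProduct_mulVec_pos hz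

theorem PosDef.image_comp_inl (hM : M.PosDef) (c : ℝ) :
    (fun z : m ⊕ l → ℝ => z ∘ Sum.inl) '' {z | M *ᵥ z ⬝ᵥ z ≤ c} =
      {x | M.schurCompl₂₂ *ᵥ x ⬝ᵥ x ≤ c} := by
  ext x
  constructor
  · rintro ⟨z, hz, rfl⟩
    rw [← Sum.elim_comp_inl_inr z] at hz
    exact (hM.schurCompl₂₂_dotProduct_le _ _).trans hz
  · intro hx
    exact ⟨_, (hM.isHermitian.dotProduct_mulVec_sumElim_neg hM.toBlocks₂₂.isUnit x).trans_le hx,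
      rfl⟩

end

theorem submatrix_mulVec_comp_dotProduct_comp {m n : Type*} [Fintype m] [Fintype n]
    (M : Matrix m m ℝ) (e : n ≃ m) (z : m → ℝ) :
    M.submatrix e e *ᵥ (z ∘ e) ⬝ᵥ (z ∘ e) = M *ᵥ z ⬝ᵥ z := by
  rw [submatrix_mulVec_equiv, Function.comp_assoc, e.self_comp_symm, Function.comp_id,
    comp_equiv_dotProduct_comp_equiv]

theorem image_comp_inr_eq_image_comp_inl {m l : Type*} [Fintype m] [Fintype l]
    (M : Matrix (m ⊕ l) (m ⊕ l) ℝ) (c : ℝ) :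
    (fun z : m ⊕ l → ℝ => z ∘ Sum.inr) '' {z | M *ᵥ z ⬝ᵥ z ≤ c} =
      (fun z : l ⊕ m → ℝ => z ∘ Sum.inl) '' {z | M.submatrix Sum.swap Sum.swap *ᵥ z ⬝ᵥ z ≤ c} := by
  have hswap := submatrix_mulVec_comp_dotProduct_comp M (Equiv.sumComm l m)
  simp only [Equiv.sumComm_apply] at hswap
  ext p
  constructor
  · rintro ⟨z, hz, rfl⟩
    exact ⟨z ∘ Sum.swap, (hswap z).trans_le hz, rfl⟩
  · rintro ⟨z, hz, rfl⟩
    refine ⟨z ∘ Sum.swap, ?_, rfl⟩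
    rwa [Set.mem_ofPred_eq, ← hswap, Function.comp_assoc, Sum.swap_swap_eq, Function.comp_id]

end Matrix

theorem statement12_general (n : ℕ) (ℏ : ℝ)
    (M : Matrix (Fin n ⊕ Fin n) (Fin n ⊕ Fin n) ℝ) (hM : M.PosDef) :
    (fun z : (Fin n ⊕ Fin n) → ℝ => z ∘ Sum.inl) '' {z | M.mulVec z ⬝ᵥ z ≤ ℏ}
        = {x : Fin n → ℝ |
            (M.toBlocks₁₁ - M.toBlocks₁₂ * M.toBlocks₂₂⁻¹ * M.toBlocks₂₁).mulVec x ⬝ᵥ x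
              ≤ ℏ} ∧
      (fun z : (Fin n ⊕ Fin n) → ℝ => z ∘ Sum.inr) '' {z | M.mulVec z ⬝ᵥ z ≤ ℏ}
        = {p : Fin n → ℝ |
            (M.toBlocks₂₂ - M.toBlocks₂₁ * M.toBlocks₁₁⁻¹ * M.toBlocks₁₂).mulVec p ⬝ᵥ p
              ≤ ℏ} ∧
      (M.toBlocks₁₁ - M.toBlocks₁₂ * M.toBlocks₂₂⁻¹ * M.toBlocks₂₁).PosDef ∧
      (M.toBlocks₂₂ - M.toBlocks₂₁ * M.toBlocks₁₁⁻¹ * M.toBlocks₁₂).PosDef := by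
  -- The blocks of `M.submatrix Sum.swap Sum.swap` are those of `M` exchanged, definitionally.
  have hM' : (M.submatrix Sum.swap Sum.swap).PosDef := hM.submatrix Sum.swap_leftInverse.injective
  exact ⟨hM.image_comp_inl ℏ, (image_comp_inr_eq_image_comp_inl M ℏ).trans (hM'.image_comp_inl ℏ),
    hM.schurCompl₂₂, hM'.schurCompl₂₂⟩

/-- The orthogonal projections of the ellipsoid `Ω = {z : Mz·z ≤ ℏ}` (with `M` symmetric
positive definite, in block form `[[M_XX, M_XP],[M_PX, M_PP]]`) onto the `x`- and
`p`-spaces are the ellipsoids defined by the Schur complements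
`M/M_PP = M_XX - M_XP M_PP⁻¹ M_PX` and `M/M_XX = M_PP - M_PX M_XX⁻¹ M_XP`,
both of which are positive definite. -/
theorem statement12 (n : ℕ) (ℏ : ℝ) (hℏ : 0 < ℏ)
    (M : Matrix (Fin n ⊕ Fin n) (Fin n ⊕ Fin n) ℝ) (hM : M.PosDef) :
    (fun z : (Fin n ⊕ Fin n) → ℝ => z ∘ Sum.inl) '' {z | M.mulVec z ⬝ᵥ z ≤ ℏ}
        = {x : Fin n → ℝ |
            (M.toBlocks₁₁ - M.toBlocks₁₂ * M.toBlocks₂₂⁻¹ * M.toBlocks₂₁).mulVec x ⬝ᵥ x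
              ≤ ℏ} ∧
      (fun z : (Fin n ⊕ Fin n) → ℝ => z ∘ Sum.inr) '' {z | M.mulVec z ⬝ᵥ z ≤ ℏ}
        = {p : Fin n → ℝ |
            (M.toBlocks₂₂ - M.toBlocks₂₁ * M.toBlocks₁₁⁻¹ * M.toBlocks₁₂).mulVec p ⬝ᵥ p
              ≤ ℏ} ∧
      (M.toBlocks₁₁ - M.toBlocks₁₂ * M.toBlocks₂₂⁻¹ * M.toBlocks₂₁).PosDef ∧
      (M.toBlocks₂₂ - M.toBlocks₂₁ * M.toBlocks₁₁⁻¹ * M.toBlocks₁₂).PosDef :=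
  statement12_general n ℏ M hM
end

section
/- Let ħ > 0. The ball B^{2n}(√ħ) is contained in the product B_X^n(√ħ) × B_P^n(√ħ) ⊆ ℝ^{2n}, and it is the unique maximal-volume centered ellipsoid contained in this product: for every invertible linear map T : ℝ^{2n} → ℝ^{2n} with T(B^{2n}(1)) ⊆ B_X^n(√ħ) × B_P^n(√ħ), the Lebesgue volume of T(B^{2n}(1)) is at most that of B^{2n}(√ħ), with equality if and only if T(B^{2n}(1)) = B^{2n}(√ħ). (Equivalently, the John ellipsoid of B_X^n(√ħ) × B_P^n(√ħ) is B^{2n}(√ħ).) -/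
/-!
If `T(B(1))` lies in `B_X(√ℏ) × B_P(√ℏ)`, every coordinate of `T z` is bounded by `√ℏ` on the
unit ball, so every row of `T` has squared norm at most `ℏ`. Hence `tr(TᵀT) ≤ 2nℏ`, and AM-GM for
the eigenvalues of `TᵀT` (in the form `y ≤ exp (y - 1)`) gives `det(T)² = det(TᵀT) ≤ ℏ^{2n}`, i.e.
`vol T(B(1)) ≤ vol B(√ℏ)`. Equality in AM-GM forces every eigenvalue to be `ℏ`, so `TᵀT = ℏ I`
and `T` maps `B(1)` onto `B(√ℏ)`.
-/

open Matrix MeasureTheory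

noncomputable section

/-- The product `B_X^n(√ℏ) × B_P^n(√ℏ)` viewed inside phase space `ℝⁿ × ℝⁿ`. -/
def prodBalls (n : ℕ) (ℏ : ℝ) : Set ((Fin n ⊕ Fin n) → ℝ) :=
  {z | ∑ i, z (Sum.inl i) ^ 2 ≤ Real.sqrt ℏ ^ 2 ∧ ∑ i, z (Sum.inr i) ^ 2 ≤ Real.sqrt ℏ ^ 2}

section

variable {ι : Type*} [Fintype ι]

namespace Real

lemma prod_exp_sub_one_le_one {y : ι → ℝ} (hsum : ∑ i, y i ≤ Fintype.card ι) :
    ∏ i, exp (y i - 1) ≤ 1 := by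
  rw [← exp_sum, exp_le_one_iff]
  simp only [Finset.sum_sub_distrib, Finset.sum_const, Finset.card_univ, nsmul_one]
  linarith

lemma prod_le_one_of_sum_le_card {y : ι → ℝ} (hy : ∀ i, 0 ≤ y i)
    (hsum : ∑ i, y i ≤ Fintype.card ι) : ∏ i, y i ≤ 1 :=
  (Finset.prod_le_prod (fun i _ => hy i) fun i _ => by linarith [add_one_le_exp (y i - 1)]).trans
    (prod_exp_sub_one_le_one hsum)

lemma eq_one_of_prod_eq_one_of_sum_le_card {y : ι → ℝ} (hy : ∀ i, 0 ≤ y i)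
    (hsum : ∑ i, y i ≤ Fintype.card ι) (hprod : ∏ i, y i = 1) (i : ι) : y i = 1 := by
  by_contra hne
  have hpos : ∀ j, 0 < y j := fun j =>
    (hy j).lt_of_ne' (Finset.prod_ne_zero_iff.mp (hprod ▸ one_ne_zero) j (Finset.mem_univ j))
  have hlt : ∏ j, y j < ∏ j, exp (y j - 1) :=
    Finset.prod_lt_prod (fun j _ => hpos j)
      (fun j _ => by linarith [add_one_le_exp (y j - 1)])
      ⟨i, Finset.mem_univ i, by linarith [add_one_lt_exp (sub_ne_zero.mpr hne)]⟩
  exact (hlt.trans_le (prod_exp_sub_one_le_one hsum)).ne hprod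

lemma prod_le_pow_card_of_sum_le {x : ι → ℝ} {c : ℝ} (hc : 0 < c) (hx : ∀ i, 0 ≤ x i)
    (hsum : ∑ i, x i ≤ Fintype.card ι * c) : ∏ i, x i ≤ c ^ Fintype.card ι := by
  have := prod_le_one_of_sum_le_card (y := fun i => x i / c) (fun i => div_nonneg (hx i) hc.le)
    (by rwa [← Finset.sum_div, div_le_iff₀ hc])
  rwa [Finset.prod_div_distrib, Finset.prod_const, Finset.card_univ, div_le_one (by positivity)]
    at this

lemma eq_of_prod_eq_pow_card_of_sum_le {x : ι → ℝ} {c : ℝ} (hc : 0 < c) (hx : ∀ i, 0 ≤ x i)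
    (hsum : ∑ i, x i ≤ Fintype.card ι * c) (hprod : ∏ i, x i = c ^ Fintype.card ι) (i : ι) :
    x i = c := by
  have := eq_one_of_prod_eq_one_of_sum_le_card (y := fun i => x i / c)
    (fun i => div_nonneg (hx i) hc.le) (by rwa [← Finset.sum_div, div_le_iff₀ hc])
    (by rw [Finset.prod_div_distrib, Finset.prod_const, Finset.card_univ, hprod,
      div_self (by positivity)]) i
  rwa [div_eq_one_iff_eq hc.ne'] at this

end Real

end

namespace Matrix

lemma sum_sq_row_le_of_forall_sq_mulVec_le {m ι : Type*} [Fintype ι] (T : Matrix m ι ℝ)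
    (j : m) {c : ℝ} (h : ∀ z : ι → ℝ, ∑ i, z i ^ 2 ≤ 1 → (T *ᵥ z) j ^ 2 ≤ c) :
    ∑ k, T j k ^ 2 ≤ c := by
  obtain hs | hs := (Finset.sum_nonneg fun k _ => sq_nonneg (T j k)).eq_or_lt
  · rw [← hs]; simpa using h 0 (by simp)
  have hz : ∑ k, (T j k / √(∑ k, T j k ^ 2)) ^ 2 = 1 := by
    simp only [div_pow, ← Finset.sum_div, Real.sq_sqrt hs.le, div_self hs.ne']
  have hTz : (T *ᵥ fun k => T j k / √(∑ k, T j k ^ 2)) j = √(∑ k, T j k ^ 2) := by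
    simp only [mulVec, dotProduct, mul_div, ← Finset.sum_div, ← sq, Real.div_sqrt]
  simpa [hTz, Real.sq_sqrt hs.le] using h _ hz.le

variable {ι : Type*} [Fintype ι] [DecidableEq ι]

lemma IsHermitian.eq_smul_one_of_eigenvalues_eq {𝕜 : Type*} [RCLike 𝕜] {S : Matrix ι ι 𝕜}
    (hS : S.IsHermitian) {c : ℝ} (h : ∀ i, hS.eigenvalues i = c) : S = (c : 𝕜) • 1 := by
  rw [hS.spectral_theorem]
  have : (RCLike.ofReal ∘ hS.eigenvalues : ι → 𝕜) = fun _ => (c : 𝕜) :=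
    funext fun i => by simp [h i]
  rw [this, ← smul_one_eq_diagonal, map_smul, map_one]

lemma prod_eigenvalues_conjTranspose_mul_self (T : Matrix ι ι ℝ) :
    ∏ i, (isHermitian_conjTranspose_mul_self T).eigenvalues i = T.det ^ 2 := by
  have := (isHermitian_conjTranspose_mul_self T).det_eq_prod_eigenvalues
  simp only [RCLike.ofReal_real_eq_id, id] at this
  rw [← this]
  simp [det_mul, sq]

lemma sum_eigenvalues_conjTranspose_mul_self_le (T : Matrix ι ι ℝ) {c : ℝ}
    (h : ∀ j, ∑ k, T j k ^ 2 ≤ c) :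
    ∑ i, (isHermitian_conjTranspose_mul_self T).eigenvalues i ≤ Fintype.card ι * c := by
  have := (isHermitian_conjTranspose_mul_self T).trace_eq_sum_eigenvalues
  simp only [RCLike.ofReal_real_eq_id, id] at this
  calc _ = ∑ j, ∑ k, T j k ^ 2 := by
        rw [← this, Finset.sum_comm]
        simp [trace, mul_apply, sq]
    _ ≤ ∑ _j : ι, c := Finset.sum_le_sum fun j _ => h j
    _ = Fintype.card ι * c := by simp

lemma det_sq_le_pow_card_of_sum_sq_row_le (T : Matrix ι ι ℝ) {c : ℝ} (hc : 0 < c)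
    (h : ∀ j, ∑ k, T j k ^ 2 ≤ c) : T.det ^ 2 ≤ c ^ Fintype.card ι := by
  rw [← prod_eigenvalues_conjTranspose_mul_self]
  exact Real.prod_le_pow_card_of_sum_le hc (eigenvalues_conjTranspose_mul_self_nonneg T)
    (sum_eigenvalues_conjTranspose_mul_self_le T h)

lemma transpose_mul_self_eq_smul_one_of_det_sq_eq (T : Matrix ι ι ℝ) {c : ℝ} (hc : 0 < c)
    (h : ∀ j, ∑ k, T j k ^ 2 ≤ c) (hdet : T.det ^ 2 = c ^ Fintype.card ι) : Tᵀ * T = c • 1 := by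
  rw [← conjTranspose_eq_transpose_of_trivial]
  simpa using (isHermitian_conjTranspose_mul_self T).eq_smul_one_of_eigenvalues_eq
    (Real.eq_of_prod_eq_pow_card_of_sum_le hc (eigenvalues_conjTranspose_mul_self_nonneg T)
      (sum_eigenvalues_conjTranspose_mul_self_le T h)
      (by rw [prod_eigenvalues_conjTranspose_mul_self, hdet]))

lemma volume_mulVec_image (T : Matrix ι ι ℝ) (s : Set (ι → ℝ)) :
    volume (T.mulVec '' s) = ENNReal.ofReal |T.det| * volume s := by
  rw [← LinearMap.det_toLin', ← Measure.addHaar_image_linearMap]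
  rfl

lemma sum_sq_mulVec_of_transpose_mul_self {T : Matrix ι ι ℝ} {c : ℝ} (hT : Tᵀ * T = c • 1)
    (z : ι → ℝ) : ∑ i, (T *ᵥ z) i ^ 2 = c * ∑ i, z i ^ 2 := by
  have h : (T *ᵥ z) ⬝ᵥ (T *ᵥ z) = z ⬝ᵥ ((Tᵀ * T) *ᵥ z) := by
    rw [← mulVec_mulVec, dotProduct_mulVec z, vecMul_transpose]
  rw [hT, smul_mulVec, one_mulVec, dotProduct_smul, smul_eq_mul] at h
  simpa only [dotProduct, sq] using h

lemma mulVec_image_unit_ball_of_transpose_mul_self {T : Matrix ι ι ℝ} {c : ℝ} (hc : 0 < c)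
    (hT : Tᵀ * T = c • 1) :
    T.mulVec '' {z | ∑ i, z i ^ 2 ≤ 1 ^ 2} = {w | ∑ i, w i ^ 2 ≤ √c ^ 2} := by
  have hinv : T * (c⁻¹ • Tᵀ) = 1 :=
    mul_eq_one_comm.mp (by rw [smul_mul, hT, smul_smul, inv_mul_cancel₀ hc.ne', one_smul])
  ext w
  simp only [Set.mem_image, Set.mem_ofPred_eq, Real.sq_sqrt hc.le, one_pow]
  constructor
  · rintro ⟨z, hz, rfl⟩
    rw [sum_sq_mulVec_of_transpose_mul_self hT]
    nlinarith
  · intro hw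
    have hTw : T *ᵥ ((c⁻¹ • Tᵀ) *ᵥ w) = w := by rw [mulVec_mulVec, hinv, one_mulVec]
    refine ⟨(c⁻¹ • Tᵀ) *ᵥ w, ?_, hTw⟩
    have := sum_sq_mulVec_of_transpose_mul_self hT ((c⁻¹ • Tᵀ) *ᵥ w)
    rw [hTw] at this
    nlinarith

end Matrix

lemma volume_setOf_sum_sq_le {ι : Type*} [Fintype ι] {r : ℝ} (hr : 0 ≤ r) :
    volume {z : ι → ℝ | ∑ i, z i ^ 2 ≤ r ^ 2} =
      ENNReal.ofReal (r ^ Fintype.card ι) *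
        volume (Metric.closedBall (0 : EuclideanSpace ℝ ι) 1) := by
  have h : {z : ι → ℝ | ∑ i, z i ^ 2 ≤ r ^ 2} =
      WithLp.toLp 2 ⁻¹' Metric.closedBall (0 : EuclideanSpace ℝ ι) r := by
    rw [EuclideanSpace.closedBall_zero_eq r hr]; rfl
  rw [h, (PiLp.volume_preserving_toLp ι).measure_preimage
    Metric.isClosed_closedBall.measurableSet.nullMeasurableSet,
    Measure.addHaar_closedBall' _ _ hr, finrank_euclideanSpace]

lemma ballPhase_sqrt_subset_prodBalls (n : ℕ) (ℏ : ℝ) : ballPhase n √ℏ ⊆ prodBalls n ℏ := by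
  intro z hz
  have hsplit : ∑ i, z (Sum.inl i) ^ 2 + ∑ i, z (Sum.inr i) ^ 2 ≤ √ℏ ^ 2 :=
    (Fintype.sum_sum_type fun i => z i ^ 2) ▸ hz
  have hX : 0 ≤ ∑ i, z (Sum.inl i) ^ 2 := Finset.sum_nonneg fun i _ => sq_nonneg _
  have hP : 0 ≤ ∑ i, z (Sum.inr i) ^ 2 := Finset.sum_nonneg fun i _ => sq_nonneg _
  exact ⟨by linarith, by linarith⟩

lemma sq_le_of_mem_prodBalls {n : ℕ} {ℏ : ℝ} {w : Fin n ⊕ Fin n → ℝ} (hw : w ∈ prodBalls n ℏ)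
    (j : Fin n ⊕ Fin n) : w j ^ 2 ≤ √ℏ ^ 2 := by
  rcases j with i | i
  · exact (Finset.single_le_sum (f := fun i => w (Sum.inl i) ^ 2)
      (fun _ _ => sq_nonneg _) (Finset.mem_univ i)).trans hw.1
  · exact (Finset.single_le_sum (f := fun i => w (Sum.inr i) ^ 2)
      (fun _ _ => sq_nonneg _) (Finset.mem_univ i)).trans hw.2

/-- The ball `B^{2n}(√ℏ)` is contained in `B_X^n(√ℏ) × B_P^n(√ℏ)` and is the unique
maximal-volume centered ellipsoid contained in it (its John ellipsoid): any invertible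
linear image `T(B^{2n}(1))` contained in the product has volume at most that of
`B^{2n}(√ℏ)`, with equality iff `T(B^{2n}(1)) = B^{2n}(√ℏ)`. -/
theorem statement14 (n : ℕ) (ℏ : ℝ) (hℏ : 0 < ℏ) :
    ballPhase n (Real.sqrt ℏ) ⊆ prodBalls n ℏ ∧
    ∀ T : Matrix (Fin n ⊕ Fin n) (Fin n ⊕ Fin n) ℝ, IsUnit T →
      T.mulVec '' ballPhase n 1 ⊆ prodBalls n ℏ →
      volume (T.mulVec '' ballPhase n 1) ≤ volume (ballPhase n (Real.sqrt ℏ)) ∧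
      (volume (T.mulVec '' ballPhase n 1) = volume (ballPhase n (Real.sqrt ℏ)) ↔
        T.mulVec '' ballPhase n 1 = ballPhase n (Real.sqrt ℏ)) := by
  refine ⟨ballPhase_sqrt_subset_prodBalls n ℏ, fun T _ hT => ?_⟩
  have hrow : ∀ j, ∑ k, T j k ^ 2 ≤ ℏ := fun j =>
    sum_sq_row_le_of_forall_sq_mulVec_le T j fun z hz =>
      Real.sq_sqrt hℏ.le ▸ sq_le_of_mem_prodBalls (hT ⟨z, by simpa [ballPhase] using hz, rfl⟩) j
  set N := Fintype.card (Fin n ⊕ Fin n)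
  set V := volume (Metric.closedBall (0 : EuclideanSpace ℝ (Fin n ⊕ Fin n)) 1)
  have hV : V ≠ 0 := (Metric.measure_closedBall_pos _ _ one_pos).ne'
  have hV' : V ≠ ⊤ := measure_closedBall_lt_top.ne
  have hvolT : volume (T.mulVec '' ballPhase n 1) = ENNReal.ofReal |T.det| * V := by
    rw [T.volume_mulVec_image, ballPhase, volume_setOf_sum_sq_le zero_le_one, one_pow,
      ENNReal.ofReal_one, one_mul]
  have hvolB : volume (ballPhase n √ℏ) = ENNReal.ofReal (√ℏ ^ N) * V :=
    volume_setOf_sum_sq_le (Real.sqrt_nonneg ℏ)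
  have hpow : (√ℏ ^ N) ^ 2 = ℏ ^ N := by rw [← pow_mul, mul_comm, pow_mul, Real.sq_sqrt hℏ.le]
  refine ⟨?_, fun heq => ?_, fun h => by rw [h]⟩
  · rw [hvolT, hvolB]
    gcongr
    exact abs_le_of_sq_le_sq (hpow ▸ T.det_sq_le_pow_card_of_sum_sq_row_le hℏ hrow) (by positivity)
  · rw [hvolT, hvolB, ENNReal.mul_left_inj hV hV',
      ENNReal.ofReal_eq_ofReal_iff (abs_nonneg _) (by positivity)] at heq
    exact mulVec_image_unit_ball_of_transpose_mul_self hℏ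
      (T.transpose_mul_self_eq_smul_one_of_det_sq_eq hℏ hrow (by rw [← sq_abs, heq, hpow]))
end
end

section
/- Let ħ > 0 and let A, B be real symmetric positive definite n×n matrices. Set X = {x ∈ ℝⁿ : Ax·x ≤ ħ} and P = {p ∈ ℝⁿ : Bp·p ≤ ħ}, and assume X^ħ ⊆ P. Then the block-diagonal matrix K = [[B^{1/2}A^{1/2}, 0],[0, B^{−1/2}A^{−1/2}]] is symplectic, and it satisfies B^{1/2}A^{1/2}(X) = P^ħ ⊆ X and B^{−1/2}A^{−1/2}(X^ħ) = P; in particular K(X × X^ħ) ⊆ X × P, so the image under K of the quantum blob {(x,p) : Ax·x + A⁻¹p·p ≤ ħ} is a quantum blob contained in X × P. -/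
open Matrix

noncomputable section

/-!
Write `A = Asq²`, `B = Bsq²` with `Asq`, `Bsq` symmetric and invertible, so that
`X = Asq⁻¹(D)` and `P = Bsq⁻¹(D)` for the Euclidean ball `D` of radius `√ℏ`. The ball is its
own `ℏ`-polar dual and polarity transforms by the inverse transpose, so `X^ℏ = Asq(D)` and
`P^ℏ = Bsq(D)`. Polarity reverses inclusions and is involutive on these ellipsoids, hence
`X^ℏ ⊆ P` gives `P^ℏ ⊆ X`. Everything else is matrix algebra: the blocks `L = Bsq Asq` and
`M = Bsq⁻¹ Asq⁻¹` satisfy `Lᵀ M = 1`, which makes `K` symplectic, and the quantum blob is the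
image of `D` under the symplectic matrix `diag(Asq⁻¹, Asq)`.
-/

open Set

section DotBall

variable {m : Type*} [Fintype m]

/-- The closed Euclidean ball of radius `√c`. -/
def dotBall (c : ℝ) : Set (m → ℝ) := {u | u ⬝ᵥ u ≤ c}

lemma dotProduct_self_nonneg (u : m → ℝ) : 0 ≤ u ⬝ᵥ u :=
  Finset.sum_nonneg fun i _ => mul_self_nonneg (u i)

lemma dotProduct_self_pos {u : m → ℝ} (hu : u ≠ 0) : 0 < u ⬝ᵥ u :=
  (dotProduct_self_nonneg u).lt_of_ne (Ne.symm (dotProduct_self_eq_zero.not.mpr hu))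

lemma dotProduct_sq_le (u v : m → ℝ) : (u ⬝ᵥ v) ^ 2 ≤ (u ⬝ᵥ u) * (v ⬝ᵥ v) := by
  simpa [dotProduct, sq] using Finset.sum_mul_sq_le_sq_mul_sq Finset.univ u v

lemma smul_dotProduct_smul_self (t : ℝ) (u : m → ℝ) :
    (t • u) ⬝ᵥ (t • u) = t ^ 2 * (u ⬝ᵥ u) := by
  rw [smul_dotProduct, dotProduct_smul, smul_eq_mul, smul_eq_mul, ← mul_assoc, sq]

lemma dotProduct_le_of_mem_dotBall {c : ℝ} (hc : 0 ≤ c) {u v : m → ℝ}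
    (hu : u ∈ dotBall c) (hv : v ∈ dotBall c) : u ⬝ᵥ v ≤ c := by
  have : (u ⬝ᵥ v) ^ 2 ≤ c ^ 2 := (dotProduct_sq_le u v).trans (by
    rw [sq]; exact mul_le_mul hu hv (dotProduct_self_nonneg v) hc)
  exact (abs_le_of_sq_le_sq' this hc).2

end DotBall

section MulVec

variable {m : Type*} [Fintype m]

lemma mul_self_mulVec_dotProduct {S : Matrix m m ℝ} (hS : S.IsSymm) (x : m → ℝ) :
    (S * S) *ᵥ x ⬝ᵥ x = S *ᵥ x ⬝ᵥ S *ᵥ x := by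
  rw [← mulVec_mulVec, dotProduct_comm, dotProduct_mulVec, ← mulVec_transpose, hS.eq]

lemma inv_mul_self_mulVec_dotProduct [DecidableEq m] {S : Matrix m m ℝ} (hS : S.IsSymm)
    (x : m → ℝ) : (S * S)⁻¹ *ᵥ x ⬝ᵥ x = S⁻¹ *ᵥ x ⬝ᵥ S⁻¹ *ᵥ x := by
  rw [Matrix.mul_inv_rev, mul_self_mulVec_dotProduct hS.inv]

lemma setOf_mul_self_mulVec_dotProduct_le {S : Matrix m m ℝ} (hS : S.IsSymm) (c : ℝ) :
    {x | (S * S) *ᵥ x ⬝ᵥ x ≤ c} = S.mulVec ⁻¹' dotBall c := by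
  ext x
  simp only [mem_ofPred_eq, mem_preimage, dotBall, mul_self_mulVec_dotProduct hS]

lemma image_mulVec_eq_preimage [DecidableEq m] {M N : Matrix m m ℝ} (h : N * M = 1)
    (S : Set (m → ℝ)) : M.mulVec '' S = N.mulVec ⁻¹' S :=
  congrFun (image_eq_preimage_of_inverse (f := M.mulVec) (g := N.mulVec)
    (fun x => by simp [mulVec_mulVec, h])
    (fun y => by simp [mulVec_mulVec, mul_eq_one_comm.mp h])) S

lemma preimage_mulVec_preimage_mulVec (M N : Matrix m m ℝ) (S : Set (m → ℝ)) :
    N.mulVec ⁻¹' (M.mulVec ⁻¹' S) = (M * N).mulVec ⁻¹' S := by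
  ext x; simp [mulVec_mulVec]

lemma image_mulVec_image_mulVec (M N : Matrix m m ℝ) (S : Set (m → ℝ)) :
    M.mulVec '' (N.mulVec '' S) = (M * N).mulVec '' S := by
  rw [image_image]; simp [mulVec_mulVec]

lemma image_mul_mulVec_preimage_mulVec [DecidableEq m] {C E : Matrix m m ℝ}
    (hC : IsUnit C.det) (hE : IsUnit E.det) (S : Set (m → ℝ)) :
    (E * C).mulVec '' (C.mulVec ⁻¹' S) = E⁻¹.mulVec ⁻¹' S := by
  rw [image_mulVec_eq_preimage (N := C⁻¹ * E⁻¹) (by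
      rw [Matrix.mul_assoc, nonsing_inv_mul_cancel_left _ _ hE, nonsing_inv_mul _ hC]),
    preimage_mulVec_preimage_mulVec, mul_nonsing_inv_cancel_left _ _ hC]

end MulVec

section BlockDiagonal

variable {m : Type*} [Fintype m]

lemma fromBlocks_mulVec_comp_inl (L M : Matrix m m ℝ) (z : m ⊕ m → ℝ) :
    (fromBlocks L 0 0 M *ᵥ z) ∘ Sum.inl = L *ᵥ (z ∘ Sum.inl) := by
  simp [fromBlocks_mulVec]

lemma fromBlocks_mulVec_comp_inr (L M : Matrix m m ℝ) (z : m ⊕ m → ℝ) :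
    (fromBlocks L 0 0 M *ᵥ z) ∘ Sum.inr = M *ᵥ (z ∘ Sum.inr) := by
  simp [fromBlocks_mulVec]

lemma dotProduct_self_sum (w : m ⊕ m → ℝ) :
    w ⬝ᵥ w = (w ∘ Sum.inl) ⬝ᵥ (w ∘ Sum.inl) + (w ∘ Sum.inr) ⬝ᵥ (w ∘ Sum.inr) :=
  Fintype.sum_sum_type _

lemma fromBlocks_mulVec_dotProduct_self (L M : Matrix m m ℝ) (z : m ⊕ m → ℝ) :
    fromBlocks L 0 0 M *ᵥ z ⬝ᵥ fromBlocks L 0 0 M *ᵥ z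
      = L *ᵥ (z ∘ Sum.inl) ⬝ᵥ L *ᵥ (z ∘ Sum.inl)
        + M *ᵥ (z ∘ Sum.inr) ⬝ᵥ M *ᵥ (z ∘ Sum.inr) := by
  rw [dotProduct_self_sum, fromBlocks_mulVec_comp_inl, fromBlocks_mulVec_comp_inr]

lemma setOf_add_le_eq_preimage_fromBlocks (L M : Matrix m m ℝ) (c : ℝ) :
    {z : m ⊕ m → ℝ | L *ᵥ (z ∘ Sum.inl) ⬝ᵥ L *ᵥ (z ∘ Sum.inl)
        + M *ᵥ (z ∘ Sum.inr) ⬝ᵥ M *ᵥ (z ∘ Sum.inr) ≤ c}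
      = (fromBlocks L 0 0 M).mulVec ⁻¹' dotBall c := by
  ext z
  simp only [mem_preimage, dotBall, mem_ofPred_eq, fromBlocks_mulVec_dotProduct_self]

lemma preimage_fromBlocks_dotBall_subset (L M : Matrix m m ℝ) (c : ℝ) :
    (fromBlocks L 0 0 M).mulVec ⁻¹' dotBall c
      ⊆ {z | z ∘ Sum.inl ∈ L.mulVec ⁻¹' dotBall c
          ∧ z ∘ Sum.inr ∈ M.mulVec ⁻¹' dotBall c} := by
  intro z hz
  have hz' : _ ≤ c := hz
  rw [fromBlocks_mulVec_dotProduct_self] at hz'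
  exact ⟨show _ ≤ c by linarith [dotProduct_self_nonneg (M *ᵥ (z ∘ Sum.inr))],
    show _ ≤ c by linarith [dotProduct_self_nonneg (L *ᵥ (z ∘ Sum.inl))]⟩

lemma image_fromBlocks_subset {L M : Matrix m m ℝ} {S S' T T' : Set (m → ℝ)}
    (hL : L.mulVec '' S ⊆ S') (hM : M.mulVec '' T ⊆ T') :
    (fromBlocks L 0 0 M).mulVec '' {z | z ∘ Sum.inl ∈ S ∧ z ∘ Sum.inr ∈ T}
      ⊆ {z | z ∘ Sum.inl ∈ S' ∧ z ∘ Sum.inr ∈ T'} := by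
  rintro _ ⟨z, ⟨hzS, hzT⟩, rfl⟩
  rw [mem_ofPred_eq, fromBlocks_mulVec_comp_inl, fromBlocks_mulVec_comp_inr]
  exact ⟨hL (mem_image_of_mem _ hzS), hM (mem_image_of_mem _ hzT)⟩

lemma image_fromBlocks_inv_eq_preimage [DecidableEq m] {C : Matrix m m ℝ} (hC : IsUnit C.det)
    (S : Set (m ⊕ m → ℝ)) :
    (fromBlocks C⁻¹ 0 0 C).mulVec '' S = (fromBlocks C 0 0 C⁻¹).mulVec ⁻¹' S :=
  image_mulVec_eq_preimage
    (by simp [fromBlocks_multiply, mul_nonsing_inv _ hC, nonsing_inv_mul _ hC]) S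

lemma ballPhase_sqrt {n : ℕ} {c : ℝ} (hc : 0 ≤ c) :
    ballPhase n (Real.sqrt c) = dotBall c := by
  simp [ballPhase, dotBall, dotProduct, sq, Real.mul_self_sqrt hc]

end BlockDiagonal

section PolarDual

variable {n : ℕ} {ℏ : ℝ}

lemma polarDual_anti {X Y : Set (Fin n → ℝ)} (h : X ⊆ Y) :
    polarDual ℏ Y ⊆ polarDual ℏ X :=
  fun _ hp x hx => hp x (h hx)

lemma polarDual_dotBall (hℏ : 0 < ℏ) :
    polarDual ℏ (dotBall ℏ : Set (Fin n → ℝ)) = dotBall ℏ := by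
  ext p
  refine ⟨fun hp => ?_, fun hp x hx => dotProduct_le_of_mem_dotBall hℏ.le hp hx⟩
  rcases eq_or_ne p 0 with rfl | hp0
  · simpa [dotBall] using hℏ.le
  have hq := dotProduct_self_pos hp0
  -- test `p` against the point `√(ℏ / p ⬝ᵥ p) • p` of the boundary sphere
  set t := Real.sqrt (ℏ / (p ⬝ᵥ p))
  have ht : 0 < t := Real.sqrt_pos.mpr (div_pos hℏ hq)
  have hts : t ^ 2 * (p ⬝ᵥ p) = ℏ := by
    rw [Real.sq_sqrt (div_pos hℏ hq).le, div_mul_cancel₀ _ hq.ne']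
  have hdual := hp (t • p) (by rw [dotBall, mem_ofPred_eq, smul_dotProduct_smul_self, hts])
  rw [dotProduct_smul, smul_eq_mul] at hdual
  show p ⬝ᵥ p ≤ ℏ
  nlinarith

lemma polarDual_preimage_mulVec {C : Matrix (Fin n) (Fin n) ℝ} (hC : IsUnit C.det)
    (X : Set (Fin n → ℝ)) :
    polarDual ℏ (C.mulVec ⁻¹' X) = (C⁻¹)ᵀ.mulVec ⁻¹' polarDual ℏ X := by
  ext p
  simp only [polarDual, mem_preimage, mem_ofPred_eq, mulVec_transpose, ← dotProduct_mulVec]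
  refine ⟨fun hp y hy => hp _ ?_, fun hp x hx => ?_⟩
  · rwa [mulVec_mulVec, mul_nonsing_inv _ hC, one_mulVec]
  · simpa [mulVec_mulVec, nonsing_inv_mul _ hC] using hp _ hx

lemma polarDual_preimage_mulVec_dotBall (hℏ : 0 < ℏ) {S : Matrix (Fin n) (Fin n) ℝ}
    (hS : S.IsSymm) (hSu : IsUnit S.det) :
    polarDual ℏ (S.mulVec ⁻¹' dotBall ℏ) = S⁻¹.mulVec ⁻¹' dotBall ℏ := by
  rw [polarDual_preimage_mulVec hSu, polarDual_dotBall hℏ, hS.inv.eq]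

lemma polarDual_polarDual_preimage_mulVec_dotBall (hℏ : 0 < ℏ)
    {C : Matrix (Fin n) (Fin n) ℝ} (hC : IsUnit C.det) :
    polarDual ℏ (polarDual ℏ (C.mulVec ⁻¹' dotBall ℏ)) = C.mulVec ⁻¹' dotBall ℏ := by
  have hC' : IsUnit (C⁻¹)ᵀ.det := isUnit_det_transpose _ (isUnit_nonsing_inv_det _ hC)
  rw [polarDual_preimage_mulVec hC, polarDual_dotBall hℏ, polarDual_preimage_mulVec hC',
    polarDual_dotBall hℏ, transpose_nonsing_inv, transpose_transpose,
    nonsing_inv_nonsing_inv _ hC]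

end PolarDual

section Symplectic

variable {n : ℕ}

lemma IsSymplectic.mul {S T : Matrix (Fin n ⊕ Fin n) (Fin n ⊕ Fin n) ℝ}
    (hS : IsSymplectic S) (hT : IsSymplectic T) : IsSymplectic (S * T) := by
  have : (S * T)ᵀ * stdJ n * (S * T) = Tᵀ * (Sᵀ * stdJ n * S) * T := by
    simp only [transpose_mul, Matrix.mul_assoc]
  rw [IsSymplectic, this, hS, hT]

lemma isSymplectic_fromBlocks {L M : Matrix (Fin n) (Fin n) ℝ} (h : Lᵀ * M = 1) :
    IsSymplectic (fromBlocks L 0 0 M) := by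
  have h' : Mᵀ * L = 1 := by simpa using congrArg transpose h
  simp [IsSymplectic, stdJ, fromBlocks_transpose, fromBlocks_multiply, h, h']

end Symplectic

theorem statement17_general (n : ℕ) (ℏ : ℝ) (hℏ : 0 < ℏ)
    (A B : Matrix (Fin n) (Fin n) ℝ)
    (hXP : polarDual ℏ {x : Fin n → ℝ | A.mulVec x ⬝ᵥ x ≤ ℏ}
      ⊆ {p : Fin n → ℝ | B.mulVec p ⬝ᵥ p ≤ ℏ}) :
    ∀ Asq Bsq : Matrix (Fin n) (Fin n) ℝ,
      Asq.PosDef → Asq * Asq = A → Bsq.PosDef → Bsq * Bsq = B →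
      IsSymplectic (Matrix.fromBlocks (Bsq * Asq) 0 0 (Bsq⁻¹ * Asq⁻¹)) ∧
      (Bsq * Asq).mulVec '' {x : Fin n → ℝ | A.mulVec x ⬝ᵥ x ≤ ℏ}
        = polarDual ℏ {p : Fin n → ℝ | B.mulVec p ⬝ᵥ p ≤ ℏ} ∧
      polarDual ℏ {p : Fin n → ℝ | B.mulVec p ⬝ᵥ p ≤ ℏ}
        ⊆ {x : Fin n → ℝ | A.mulVec x ⬝ᵥ x ≤ ℏ} ∧
      (Bsq⁻¹ * Asq⁻¹).mulVec ''
          polarDual ℏ {x : Fin n → ℝ | A.mulVec x ⬝ᵥ x ≤ ℏ}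
        = {p : Fin n → ℝ | B.mulVec p ⬝ᵥ p ≤ ℏ} ∧
      (Matrix.fromBlocks (Bsq * Asq) 0 0 (Bsq⁻¹ * Asq⁻¹)).mulVec ''
          {z : (Fin n ⊕ Fin n) → ℝ |
            (z ∘ Sum.inl) ∈ {x : Fin n → ℝ | A.mulVec x ⬝ᵥ x ≤ ℏ}
              ∧ (z ∘ Sum.inr) ∈ polarDual ℏ {x : Fin n → ℝ | A.mulVec x ⬝ᵥ x ≤ ℏ}}
        ⊆ {z : (Fin n ⊕ Fin n) → ℝ |
            A.mulVec (z ∘ Sum.inl) ⬝ᵥ (z ∘ Sum.inl) ≤ ℏ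
              ∧ B.mulVec (z ∘ Sum.inr) ⬝ᵥ (z ∘ Sum.inr) ≤ ℏ} ∧
      (∃ S : Matrix (Fin n ⊕ Fin n) (Fin n ⊕ Fin n) ℝ, IsSymplectic S ∧
        (Matrix.fromBlocks (Bsq * Asq) 0 0 (Bsq⁻¹ * Asq⁻¹)).mulVec ''
            {z : (Fin n ⊕ Fin n) → ℝ |
              A.mulVec (z ∘ Sum.inl) ⬝ᵥ (z ∘ Sum.inl)
                + A⁻¹.mulVec (z ∘ Sum.inr) ⬝ᵥ (z ∘ Sum.inr) ≤ ℏ}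
          = S.mulVec '' ballPhase n (Real.sqrt ℏ)) ∧
      (Matrix.fromBlocks (Bsq * Asq) 0 0 (Bsq⁻¹ * Asq⁻¹)).mulVec ''
          {z : (Fin n ⊕ Fin n) → ℝ |
            A.mulVec (z ∘ Sum.inl) ⬝ᵥ (z ∘ Sum.inl)
              + A⁻¹.mulVec (z ∘ Sum.inr) ⬝ᵥ (z ∘ Sum.inr) ≤ ℏ}
        ⊆ {z : (Fin n ⊕ Fin n) → ℝ |
            A.mulVec (z ∘ Sum.inl) ⬝ᵥ (z ∘ Sum.inl) ≤ ℏ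
              ∧ B.mulVec (z ∘ Sum.inr) ⬝ᵥ (z ∘ Sum.inr) ≤ ℏ} := by
  intro Asq Bsq hAsq hA2 hBsq hB2
  subst hA2 hB2
  have sA := isHermitian_iff_isSymm.mp hAsq.isHermitian
  have sB := isHermitian_iff_isSymm.mp hBsq.isHermitian
  have uA := (isUnit_iff_isUnit_det Asq).mp hAsq.isUnit
  have uB := (isUnit_iff_isUnit_det Bsq).mp hBsq.isUnit
  rw [setOf_mul_self_mulVec_dotProduct_le sA, setOf_mul_self_mulVec_dotProduct_le sB] at hXP ⊢
  have hPX : polarDual ℏ (Bsq.mulVec ⁻¹' dotBall ℏ) ⊆ Asq.mulVec ⁻¹' dotBall ℏ :=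
    (polarDual_anti hXP).trans (polarDual_polarDual_preimage_mulVec_dotBall hℏ uA).le
  rw [polarDual_preimage_mulVec_dotBall hℏ sB uB] at hPX
  rw [polarDual_preimage_mulVec_dotBall hℏ sA uA, polarDual_preimage_mulVec_dotBall hℏ sB uB]
  simp only [mul_self_mulVec_dotProduct sA, mul_self_mulVec_dotProduct sB,
    inv_mul_self_mulVec_dotProduct sA, setOf_add_le_eq_preimage_fromBlocks, ballPhase_sqrt hℏ.le]
  have hK : IsSymplectic (fromBlocks (Bsq * Asq) 0 0 (Bsq⁻¹ * Asq⁻¹)) :=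
    isSymplectic_fromBlocks (by
      rw [transpose_mul, sA.eq, sB.eq, Matrix.mul_assoc, mul_nonsing_inv_cancel_left _ _ uB,
        mul_nonsing_inv _ uA])
  have hLX := image_mul_mulVec_preimage_mulVec uA uB (dotBall ℏ)
  have hMXd := image_mul_mulVec_preimage_mulVec (isUnit_nonsing_inv_det _ uA)
    (isUnit_nonsing_inv_det _ uB) (dotBall ℏ)
  rw [nonsing_inv_nonsing_inv _ uB] at hMXd
  have hProd := image_fromBlocks_subset (hLX.trans_subset hPX) hMXd.subset
  refine ⟨hK, hLX, hPX, hMXd, hProd,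
    ⟨fromBlocks (Bsq * Asq) 0 0 (Bsq⁻¹ * Asq⁻¹) * fromBlocks Asq⁻¹ 0 0 Asq, ?_, ?_⟩,
    (image_mono (preimage_fromBlocks_dotBall_subset _ _ _)).trans hProd⟩
  · exact hK.mul (isSymplectic_fromBlocks (by rw [sA.inv.eq, nonsing_inv_mul _ uA]))
  · rw [← image_fromBlocks_inv_eq_preimage uA, image_mulVec_image_mulVec]

/-- If `X^ℏ ⊆ P` (for the ellipsoids `X`, `P` carried by `A`, `B`), then the
block-diagonal matrix `K = [[B^{1/2}A^{1/2}, 0],[0, B^{-1/2}A^{-1/2}]]` is symplectic,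
`B^{1/2}A^{1/2}(X) = P^ℏ ⊆ X`, `B^{-1/2}A^{-1/2}(X^ℏ) = P`; in particular
`K(X × X^ℏ) ⊆ X × P`, so the image under `K` of the quantum blob
`{(x,p) : Ax·x + A⁻¹p·p ≤ ℏ}` is a quantum blob contained in `X × P`. -/
theorem statement17 (n : ℕ) (ℏ : ℝ) (hℏ : 0 < ℏ)
    (A B : Matrix (Fin n) (Fin n) ℝ) (hA : A.PosDef) (hB : B.PosDef)
    (hXP : polarDual ℏ {x : Fin n → ℝ | A.mulVec x ⬝ᵥ x ≤ ℏ}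
      ⊆ {p : Fin n → ℝ | B.mulVec p ⬝ᵥ p ≤ ℏ}) :
    ∀ Asq Bsq : Matrix (Fin n) (Fin n) ℝ,
      Asq.PosDef → Asq * Asq = A → Bsq.PosDef → Bsq * Bsq = B →
      IsSymplectic (Matrix.fromBlocks (Bsq * Asq) 0 0 (Bsq⁻¹ * Asq⁻¹)) ∧
      (Bsq * Asq).mulVec '' {x : Fin n → ℝ | A.mulVec x ⬝ᵥ x ≤ ℏ}
        = polarDual ℏ {p : Fin n → ℝ | B.mulVec p ⬝ᵥ p ≤ ℏ} ∧
      polarDual ℏ {p : Fin n → ℝ | B.mulVec p ⬝ᵥ p ≤ ℏ}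
        ⊆ {x : Fin n → ℝ | A.mulVec x ⬝ᵥ x ≤ ℏ} ∧
      (Bsq⁻¹ * Asq⁻¹).mulVec ''
          polarDual ℏ {x : Fin n → ℝ | A.mulVec x ⬝ᵥ x ≤ ℏ}
        = {p : Fin n → ℝ | B.mulVec p ⬝ᵥ p ≤ ℏ} ∧
      (Matrix.fromBlocks (Bsq * Asq) 0 0 (Bsq⁻¹ * Asq⁻¹)).mulVec ''
          {z : (Fin n ⊕ Fin n) → ℝ |
            (z ∘ Sum.inl) ∈ {x : Fin n → ℝ | A.mulVec x ⬝ᵥ x ≤ ℏ}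
              ∧ (z ∘ Sum.inr) ∈ polarDual ℏ {x : Fin n → ℝ | A.mulVec x ⬝ᵥ x ≤ ℏ}}
        ⊆ {z : (Fin n ⊕ Fin n) → ℝ |
            A.mulVec (z ∘ Sum.inl) ⬝ᵥ (z ∘ Sum.inl) ≤ ℏ
              ∧ B.mulVec (z ∘ Sum.inr) ⬝ᵥ (z ∘ Sum.inr) ≤ ℏ} ∧
      (∃ S : Matrix (Fin n ⊕ Fin n) (Fin n ⊕ Fin n) ℝ, IsSymplectic S ∧
        (Matrix.fromBlocks (Bsq * Asq) 0 0 (Bsq⁻¹ * Asq⁻¹)).mulVec ''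
            {z : (Fin n ⊕ Fin n) → ℝ |
              A.mulVec (z ∘ Sum.inl) ⬝ᵥ (z ∘ Sum.inl)
                + A⁻¹.mulVec (z ∘ Sum.inr) ⬝ᵥ (z ∘ Sum.inr) ≤ ℏ}
          = S.mulVec '' ballPhase n (Real.sqrt ℏ)) ∧
      (Matrix.fromBlocks (Bsq * Asq) 0 0 (Bsq⁻¹ * Asq⁻¹)).mulVec ''
          {z : (Fin n ⊕ Fin n) → ℝ |
            A.mulVec (z ∘ Sum.inl) ⬝ᵥ (z ∘ Sum.inl)
              + A⁻¹.mulVec (z ∘ Sum.inr) ⬝ᵥ (z ∘ Sum.inr) ≤ ℏ}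
        ⊆ {z : (Fin n ⊕ Fin n) → ℝ |
            A.mulVec (z ∘ Sum.inl) ⬝ᵥ (z ∘ Sum.inl) ≤ ℏ
              ∧ B.mulVec (z ∘ Sum.inr) ⬝ᵥ (z ∘ Sum.inr) ≤ ℏ} :=
  statement17_general n ℏ hℏ A B hXP
end
end
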